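/- arXiv:math/0310377 — 6 statements merged into one kernel-verified Lean document; each statement's English description precedes it below -/
import Mathlib

section
/- Lower bound via the moment curve: for all positive integers d, j, k with d·k < j·(2^k − 1), the triple (d, j, k) is not admissible; that is, there exist j continuous mass distributions on ℝ^d (uniform measures on disjoint intervals of the moment curve) such that no collection of k oriented hyperplanes is a simultaneous equipartition of all of them. -/
open MeasureTheory

/-- The open orthant associated to `k` oriented hyperplanes `(u i, c i)` in `ℝ^d` and a
sign vector `ε` (with `true` encoding `+1` and `false` encoding `-1`):
`O_ε = {x | ε i * (⟪u i, x⟫ - c i) > 0 for all i}`. -/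
def openOrthant {d k : ℕ} (u : Fin k → EuclideanSpace ℝ (Fin d)) (c : Fin k → ℝ)
    (ε : Fin k → Bool) : Set (EuclideanSpace ℝ (Fin d)) :=
  {x | ∀ i, (if ε i then (1 : ℝ) else -1) * ((inner ℝ (u i) x : ℝ) - c i) > 0}

/-- The oriented hyperplanes `(u i, c i)` form an equipartition of the measure `μ`:
every open orthant carries exactly the fraction `1/2^k` of the total mass. -/
def IsEquipartition {d k : ℕ} (μ : Measure (EuclideanSpace ℝ (Fin d)))
    (u : Fin k → EuclideanSpace ℝ (Fin d)) (c : Fin k → ℝ) : Prop :=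
  ∀ ε : Fin k → Bool, μ (openOrthant u c ε) = μ Set.univ / 2 ^ k

/-- The triple `(d, j, k)` is admissible: every collection of `j` continuous mass
distributions (finite Borel measures absolutely continuous w.r.t. Lebesgue measure) on `ℝ^d`
admits a simultaneous equipartition by `k` oriented hyperplanes. -/
def Admissible (d j k : ℕ) : Prop :=
  ∀ μ : Fin j → Measure (EuclideanSpace ℝ (Fin d)),
    (∀ i, IsFiniteMeasure (μ i)) → (∀ i, μ i ≪ volume) →
    ∃ (u : Fin k → EuclideanSpace ℝ (Fin d)) (c : Fin k → ℝ),
      (∀ i, u i ≠ 0) ∧ ∀ i, IsEquipartition (μ i) u c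



open Metric Polynomial ENNReal

noncomputable section

/-- moment curve -/
def mcurve (d : ℕ) (t : ℝ) : EuclideanSpace ℝ (Fin d) :=
  WithLp.toLp 2 (fun i : Fin d => t ^ ((i : ℕ) + 1))

def mpoly {d : ℕ} (u : EuclideanSpace ℝ (Fin d)) (c : ℝ) : Polynomial ℝ :=
  (∑ l : Fin d, C (u l) * X ^ ((l : ℕ) + 1)) - C c

lemma mpoly_eval {d : ℕ} (u : EuclideanSpace ℝ (Fin d)) (c : ℝ) (t : ℝ) :
    (mpoly u c).eval t = (inner ℝ u (mcurve d t) : ℝ) - c := by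
  simp [mpoly, mcurve, eval_finset_sum, PiLp.inner_apply, RCLike.inner_apply, conj_trivial]
  exact Finset.sum_congr rfl fun _ _ => mul_comm _ _

lemma mpoly_natDegree_le {d : ℕ} (u : EuclideanSpace ℝ (Fin d)) (c : ℝ) :
    (mpoly u c).natDegree ≤ d := by
  have : (mpoly u c).degree ≤ (d : ℕ) := by
    refine le_trans (degree_sub_le _ _) ?_
    simp only [sup_le_iff]
    constructor
    · refine le_trans (degree_sum_le _ _) ?_
      refine Finset.sup_le fun l _ => le_trans (degree_C_mul_X_pow_le _ _) ?_
      exact_mod_cast Nat.cast_le.2 l.2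
    · exact le_trans degree_C_le (by exact_mod_cast Nat.zero_le d)
  exact natDegree_le_iff_degree_le.2 this

lemma mpoly_coeff_succ {d : ℕ} (u : EuclideanSpace ℝ (Fin d)) (c : ℝ) (m : Fin d) :
    (mpoly u c).coeff ((m : ℕ) + 1) = u m := by
  simp only [mpoly, coeff_sub, finset_sum_coeff, coeff_C_mul, coeff_X_pow, coeff_C,
    Nat.succ_ne_zero, if_false, sub_zero]
  rw [Finset.sum_eq_single m]
  · simp
  · intro l _ hl
    have : ¬ ((m : ℕ) + 1 = (l : ℕ) + 1) := by
      simp only [Nat.add_right_cancel_iff]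
      exact fun hc => hl (Fin.ext hc.symm)
    simp [this]
    intro hc; exact absurd (congrArg (· + 1) hc) this
  · simp

lemma mpoly_eq_zero {d : ℕ} {u : EuclideanSpace ℝ (Fin d)} {c : ℝ}
    (h : mpoly u c = 0) : u = 0 ∧ c = 0 := by
  constructor
  · ext m
    have := mpoly_coeff_succ u c m
    rw [h] at this
    simpa using this.symm
  · have : (mpoly u c).coeff 0 = -c := by
      simp [mpoly, coeff_sub, finset_sum_coeff, coeff_C_mul, coeff_X_pow]
    rw [h] at this
    simp at this
    linarith [this]

lemma mpoly_ne_zero {d : ℕ} {u : EuclideanSpace ℝ (Fin d)} (hu : u ≠ 0) (c : ℝ) :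
    mpoly u c ≠ 0 := fun h => hu (mpoly_eq_zero h).1


/-- On any `d+1` distinct reals, a normalized polynomial can't be uniformly tiny. -/
lemma exists_big_node {d : ℕ} (T : Finset ℝ) (hT : T.card = d + 1) :
    ∃ δ > 0, ∀ (u : EuclideanSpace ℝ (Fin d)) (c : ℝ), ‖u‖ = 1 →
      ∃ t ∈ T, δ < |(mpoly u c).eval t| := by
  have hne : Nonempty {t // t ∈ T} := by
    rw [Finset.nonempty_coe_sort]
    exact Finset.card_pos.1 (by omega)
  let f : (EuclideanSpace ℝ (Fin d) × ℝ) →ₗ[ℝ] ({t // t ∈ T} → ℝ) :=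
    { toFun := fun p => fun t => (mpoly p.1 p.2).eval (t : ℝ)
      map_add' := by
        intro p q
        funext t
        show (mpoly (p.1 + q.1) (p.2 + q.2)).eval _ = _
        have : mpoly (p.1 + q.1) (p.2 + q.2) = mpoly p.1 p.2 + mpoly q.1 q.2 := by
          simp only [mpoly]
          have : ∀ l : Fin d, (p.1 + q.1) l = p.1 l + q.1 l := fun l => rfl
          simp only [this, C_add, add_mul, Finset.sum_add_distrib]
          ring
        simp [this]
      map_smul' := by
        intro r p
        funext t
        show (mpoly (r • p.1) (r * p.2)).eval _ = _
        have : mpoly (r • p.1) (r * p.2) = C r * mpoly p.1 p.2 := by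
          simp only [mpoly]
          have : ∀ l : Fin d, (r • p.1) l = r * p.1 l := fun l => rfl
          simp only [this, C_mul, mul_sub, Finset.mul_sum, mul_assoc]
        simp [this] }
  have hker : LinearMap.ker f = ⊥ := by
    rw [LinearMap.ker_eq_bot']
    intro p hp
    have heval : ∀ t : {t // t ∈ T}, (mpoly p.1 p.2).eval ((fun s : {t // t ∈ T} => (s : ℝ)) t) = 0 := by
      intro t
      exact congrFun hp t
    have hinj : Function.Injective (fun s : {t // t ∈ T} => (s : ℝ)) := Subtype.coe_injective
    have hcard : (mpoly p.1 p.2).natDegree < Fintype.card {t // t ∈ T} := by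
      rw [Fintype.card_coe, hT]
      exact Nat.lt_succ_of_le (mpoly_natDegree_le _ _)
    have := Polynomial.eq_zero_of_natDegree_lt_card_of_eval_eq_zero _ hinj heval hcard
    obtain ⟨h1, h2⟩ := mpoly_eq_zero this
    exact Prod.ext h1 h2
  obtain ⟨K, hK0, hanti⟩ := f.exists_antilipschitzWith hker
  refine ⟨(2 * (K:ℝ))⁻¹, by positivity, ?_⟩
  intro u c hu
  by_contra hcon
  push_neg at hcon
  have hnorm : ‖f (u, c)‖ ≤ (2 * (K:ℝ))⁻¹ := by
    rw [pi_norm_le_iff_of_nonneg (by positivity)]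
    intro t
    exact hcon (t : ℝ) t.2
  have hlow : (1 : ℝ) ≤ K * ‖f (u, c)‖ := by
    have h1 : ‖(u, c)‖ ≤ K * ‖f (u, c)‖ := by
      have := hanti.le_mul_dist (u, c) 0
      simpa [dist_zero_right] using this
    have h2 : (1 : ℝ) ≤ ‖(u, c)‖ := by
      calc (1:ℝ) = ‖u‖ := hu.symm
      _ ≤ ‖(u, c)‖ := norm_fst_le ((u, c) : EuclideanSpace ℝ (Fin d) × ℝ)
    linarith
  have hKpos : (0:ℝ) < K := hK0
  have hhalf : (K:ℝ) * (2 * (K:ℝ))⁻¹ = 1/2 := by field_simp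
  have := mul_le_mul_of_nonneg_left hnorm (le_of_lt hKpos)
  rw [hhalf] at this
  linarith

lemma exists_delta (d : ℕ) (X : Finset ℝ) (hX : d + 1 ≤ X.card) :
    ∃ δ > 0, ∀ (u : EuclideanSpace ℝ (Fin d)) (c : ℝ), ‖u‖ = 1 →
      (X.filter fun t => |(mpoly u c).eval t| ≤ δ).card ≤ d := by
  classical
  set P := X.powersetCard (d + 1) with hP
  have hPne : P.Nonempty := Finset.powersetCard_nonempty.2 hX
  let g : Finset ℝ → ℝ := fun T =>
    if h : T.card = d + 1 then Classical.choose (exists_big_node (d := d) T h) else 1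
  have hg : ∀ T ∈ P, 0 < g T ∧ ∀ (u : EuclideanSpace ℝ (Fin d)) (c : ℝ), ‖u‖ = 1 →
      ∃ t ∈ T, g T < |(mpoly u c).eval t| := by
    intro T hT
    have hTc : T.card = d + 1 := (Finset.mem_powersetCard.1 hT).2
    have := Classical.choose_spec (exists_big_node (d := d) T hTc)
    simp only [g, dif_pos hTc]
    exact ⟨this.1, this.2⟩
  refine ⟨P.inf' hPne g, ?_, ?_⟩
  · rw [gt_iff_lt, Finset.lt_inf'_iff]
    exact fun T hT => (hg T hT).1
  · intro u c hu
    by_contra hcon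
    push_neg at hcon
    obtain ⟨T, hTsub, hTcard⟩ := Finset.exists_subset_card_eq hcon
    have hTP : T ∈ P := Finset.mem_powersetCard.2
      ⟨hTsub.trans (Finset.filter_subset _ _), hTcard⟩
    obtain ⟨t, htT, hbig⟩ := (hg T hTP).2 u c hu
    have hsmall := (Finset.mem_filter.1 (hTsub htT)).2
    have : P.inf' hPne g ≤ g T := Finset.inf'_le _ hTP
    linarith

lemma coord_le_norm {d : ℕ} (v : EuclideanSpace ℝ (Fin d)) (i : Fin d) : |v i| ≤ ‖v‖ := by
  rw [EuclideanSpace.norm_eq]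
  calc |v i| = Real.sqrt (‖v i‖ ^ 2) := by
        rw [Real.sqrt_sq_eq_abs]; simp
    _ ≤ _ := by
        apply Real.sqrt_le_sqrt
        exact Finset.single_le_sum (f := fun i => ‖v i‖ ^ 2)
          (fun m _ => sq_nonneg _) (Finset.mem_univ i)

lemma isOpen_openOrthant {d k : ℕ} (u : Fin k → EuclideanSpace ℝ (Fin d)) (c : Fin k → ℝ)
    (ε : Fin k → Bool) : IsOpen (openOrthant u c ε) := by
  have : openOrthant u c ε =
      ⋂ i, {x : EuclideanSpace ℝ (Fin d) |
        0 < (if ε i then (1 : ℝ) else -1) * ((inner ℝ (u i) x : ℝ) - c i)} := by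
    ext y; simp [openOrthant, Set.mem_iInter]
  rw [this]
  refine isOpen_iInter_of_finite fun i => ?_
  have hc : Continuous fun x : EuclideanSpace ℝ (Fin d) =>
      (if ε i then (1 : ℝ) else -1) * ((inner ℝ (u i) x : ℝ) - c i) :=
    continuous_const.mul ((continuous_const.inner continuous_id).sub continuous_const)
  exact isOpen_lt continuous_const hc

lemma openOrthant_normalize {d k : ℕ} (u : Fin k → EuclideanSpace ℝ (Fin d)) (c : Fin k → ℝ)
    (hu : ∀ m, u m ≠ 0) (ε : Fin k → Bool) :
    openOrthant (fun m => ‖u m‖⁻¹ • u m) (fun m => ‖u m‖⁻¹ * c m) ε = openOrthant u c ε := by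
  ext y
  simp only [openOrthant, Set.mem_setOf_eq]
  refine forall_congr' fun m => ?_
  have hpos : (0:ℝ) < ‖u m‖⁻¹ := by
    have := norm_pos_iff.2 (hu m); positivity
  have : (if ε m then (1:ℝ) else -1) * ((inner ℝ (‖u m‖⁻¹ • u m) y : ℝ) - ‖u m‖⁻¹ * c m)
      = ‖u m‖⁻¹ * ((if ε m then (1:ℝ) else -1) * ((inner ℝ (u m) y : ℝ) - c m)) := by
    rw [real_inner_smul_left]; ring
  rw [gt_iff_lt, gt_iff_lt, this]
  exact mul_pos_iff_of_pos_left hpos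

/-- Lower bound via the moment curve: if `d * k < j * (2^k - 1)` (with `d, j, k` positive),
then the triple `(d, j, k)` is not admissible. -/
theorem not_admissible_of_lt (d j k : ℕ) (hd : 0 < d) (hj : 0 < j) (hk : 0 < k)
    (h : d * k < j * (2 ^ k - 1)) : ¬ Admissible d j k := by
  classical
  intro hadm
  have h2k : 2 ≤ 2 ^ k := by
    calc 2 = 2 ^ 1 := rfl
    _ ≤ 2 ^ k := Nat.pow_le_pow_right (by norm_num) hk
  set N : ℕ := 2 ^ k * (k * d) + 1 with hN
  have hNpos : 0 < N := Nat.succ_pos _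
  -- nodes
  set x : Fin j → Fin N → ℝ := fun i n => (i : ℝ) + ((n : ℝ) + 1) / ((N : ℝ) + 1) with hx
  have hNR : (0:ℝ) < (N:ℝ) + 1 := by positivity
  have hfrac : ∀ n : Fin N, 0 < ((n:ℝ)+1)/((N:ℝ)+1) ∧ ((n:ℝ)+1)/((N:ℝ)+1) < 1 := by
    intro n
    constructor
    · positivity
    · rw [div_lt_one hNR]
      have : (n:ℝ) < N := by exact_mod_cast n.2
      linarith
  have hmem : ∀ (i : Fin j) (n : Fin N), x i n ∈ Set.Ioo (i:ℝ) ((i:ℝ)+1) := by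
    intro i n
    obtain ⟨h1, h2⟩ := hfrac n
    exact ⟨by simp only [hx]; linarith, by simp only [hx]; linarith⟩
  have hsep : ∀ (i : Fin j) (n n' : Fin N), n ≠ n' → 1/((N:ℝ)+1) ≤ |x i n - x i n'| := by
    intro i n n' hne
    have hnn : (n:ℕ) ≠ (n':ℕ) := fun hc => hne (Fin.ext hc)
    have : x i n - x i n' = ((n:ℝ) - (n':ℝ)) / ((N:ℝ)+1) := by
      simp only [hx]; ring
    rw [this, abs_div, abs_of_pos hNR]
    have hz : (1:ℤ) ≤ |((n:ℕ):ℤ) - ((n':ℕ):ℤ)| :=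
      Int.one_le_abs (sub_ne_zero.2 (by exact_mod_cast hnn))
    have h1le : (1:ℝ) ≤ |((n:ℕ):ℝ) - ((n':ℕ):ℝ)| := by exact_mod_cast hz
    gcongr
  have hxinj : ∀ (i i' : Fin j) (n n' : Fin N), x i n = x i' n' → i = i' ∧ n = n' := by
    intro i i' n n' hEq
    have hi : i = i' := by
      by_contra hii
      obtain ⟨a1, a2⟩ := hmem i n
      obtain ⟨b1, b2⟩ := hmem i' n'
      rw [hEq] at a1 a2
      have hcast : ((i:ℕ):ℝ) ≠ ((i':ℕ):ℝ) := by
        intro hc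
        exact hii (Fin.ext (by exact_mod_cast hc))
      have h1 : ((i:ℕ):ℝ) < (i':ℕ) + 1 := lt_trans a1 b2
      have h2 : ((i':ℕ):ℝ) < (i:ℕ) + 1 := lt_trans b1 a2
      have : (i:ℕ) = (i':ℕ) := by
        have p1 : (i:ℕ) < (i':ℕ) + 1 := by exact_mod_cast h1
        have p2 : (i':ℕ) < (i:ℕ) + 1 := by exact_mod_cast h2
        omega
      exact hii (Fin.ext this)
    refine ⟨hi, ?_⟩
    subst hi
    by_contra hne
    have := hsep i n n' hne
    rw [hEq] at this
    simp at this
    linarith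
  -- global node set
  set X : Finset ℝ := Finset.image (fun p : Fin j × Fin N => x p.1 p.2) Finset.univ with hXdef
  have hXcard : d + 1 ≤ X.card := by
    have hinj : Function.Injective (fun p : Fin j × Fin N => x p.1 p.2) := by
      intro p q hpq
      obtain ⟨h1, h2⟩ := hxinj p.1 q.1 p.2 q.2 hpq
      exact Prod.ext h1 h2
    rw [hXdef, Finset.card_image_of_injective _ hinj, Finset.card_univ, Fintype.card_prod,
      Fintype.card_fin, Fintype.card_fin]
    have h1 : d + 1 ≤ N := by
      have : 2 * (1 * d) ≤ 2 ^ k * (k * d) :=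
        Nat.mul_le_mul h2k (Nat.mul_le_mul_right d hk)
      omega
    calc d + 1 ≤ N := h1
    _ ≤ j * N := Nat.le_mul_of_pos_left N hj
  obtain ⟨δ₀, hδ₀pos, hδ₀p⟩ := exists_delta d X hXcard
  set δ : ℝ := min δ₀ (1 / (4 * ((N:ℝ) + 1))) with hδdef
  have hδpos : 0 < δ := lt_min hδ₀pos (by positivity)
  have hδle : δ ≤ δ₀ := min_le_left _ _
  have hδsep : 2 * δ < 1 / ((N:ℝ) + 1) := by
    have : δ ≤ 1 / (4 * ((N:ℝ) + 1)) := min_le_right _ _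
    have h4 : 1 / (4 * ((N:ℝ) + 1)) < 1 / (2 * ((N:ℝ)+1)) := by
      apply div_lt_div_of_pos_left one_pos (by positivity)
      linarith
    calc 2 * δ ≤ 2 * (1 / (4 * ((N:ℝ) + 1))) := by linarith
    _ < 2 * (1 / (2 * ((N:ℝ)+1))) := by linarith
    _ = 1 / ((N:ℝ)+1) := by field_simp
  -- the measures
  set U : Fin j → Set (EuclideanSpace ℝ (Fin d)) :=
    fun i => ⋃ n : Fin N, ball (mcurve d (x i n)) δ with hUdef
  have hUmeas : ∀ i, MeasurableSet (U i) :=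
    fun i => MeasurableSet.iUnion fun n => measurableSet_ball
  set μ : Fin j → Measure (EuclideanSpace ℝ (Fin d)) :=
    fun i => volume.restrict (U i) with hμdef
  have hfin : ∀ i, IsFiniteMeasure (μ i) := by
    intro i
    constructor
    rw [hμdef, Measure.restrict_apply_univ]
    refine lt_of_le_of_lt (measure_iUnion_le _) ?_
    rw [tsum_fintype]
    exact ENNReal.sum_lt_top.2 fun n _ => measure_ball_lt_top
  have hac : ∀ i, μ i ≪ volume :=
    fun i => Measure.absolutelyContinuous_of_le Measure.restrict_le_self
  obtain ⟨u₀, c₀, hu₀, heq₀⟩ := hadm μ hfin hac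
  -- normalize
  set u : Fin k → EuclideanSpace ℝ (Fin d) := fun m => ‖u₀ m‖⁻¹ • u₀ m with hudef
  set c : Fin k → ℝ := fun m => ‖u₀ m‖⁻¹ * c₀ m with hcdef
  have hunit : ∀ m, ‖u m‖ = 1 := by
    intro m
    rw [hudef]
    simp only [norm_smul, norm_inv, norm_norm]
    exact inv_mul_cancel₀ (norm_ne_zero_iff.2 (hu₀ m))
  have hune : ∀ m, u m ≠ 0 := by
    intro m hc0
    have := hunit m
    rw [hc0] at this
    simp at this
  have heq : ∀ i, IsEquipartition (μ i) u c := by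
    intro i ε
    rw [hudef, hcdef, openOrthant_normalize u₀ c₀ hu₀ ε]
    exact heq₀ i ε
  -- the polynomials
  set P : Fin k → Polynomial ℝ := fun m => mpoly (u m) (c m) with hPdef
  have hPne : ∀ m, P m ≠ 0 := fun m => mpoly_ne_zero (hune m) (c m)
  -- bad nodes
  set Bad : Fin j → Finset (Fin N) :=
    fun i => Finset.univ.filter (fun n => ∃ m, |(P m).eval (x i n)| ≤ δ) with hBdef
  have hBadcard : ∀ i, (Bad i).card ≤ k * d := by
    intro i
    have hsub : Bad i ⊆ Finset.univ.biUnion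
        (fun m : Fin k => Finset.univ.filter fun n : Fin N => |(P m).eval (x i n)| ≤ δ) := by
      intro n hn
      rw [hBdef] at hn
      obtain ⟨m, hm⟩ := (Finset.mem_filter.1 hn).2
      exact Finset.mem_biUnion.2 ⟨m, Finset.mem_univ m, Finset.mem_filter.2 ⟨Finset.mem_univ n, hm⟩⟩
    refine le_trans (Finset.card_le_card hsub) (le_trans (Finset.card_biUnion_le) ?_)
    have hm1 : ∀ m : Fin k,
        (Finset.univ.filter fun n : Fin N => |(P m).eval (x i n)| ≤ δ).card ≤ d := by
      intro m
      have := hδ₀p (u m) (c m) (hunit m)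
      refine le_trans (Finset.card_le_card_of_injOn (fun n => x i n) ?_ ?_) this
      · intro n hn
        simp only [Finset.mem_coe, Finset.mem_filter] at hn ⊢
        refine ⟨Finset.mem_image.2 ⟨(i, n), Finset.mem_univ _, rfl⟩, le_trans hn.2 hδle⟩
      · intro a _ b _ hab
        exact (hxinj i i a b hab).2
    calc ∑ m : Fin k, (Finset.univ.filter fun n : Fin N => |(P m).eval (x i n)| ≤ δ).card
        ≤ ∑ _m : Fin k, d := Finset.sum_le_sum fun m _ => hm1 m
    _ = k * d := by simp [Finset.sum_const, Finset.card_univ]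
  -- ball volume
  set v : ℝ≥0∞ := volume (ball (0 : EuclideanSpace ℝ (Fin d)) δ) with hvdef
  have hv0 : v ≠ 0 := (measure_ball_pos volume 0 hδpos).ne'
  have hvtop : v ≠ ⊤ := measure_ball_lt_top.ne
  have hball : ∀ z : EuclideanSpace ℝ (Fin d), volume (ball z δ) = v :=
    fun z => Measure.addHaar_ball_center volume z δ
  have hdisj : ∀ i : Fin j, Pairwise (Function.onFun Disjoint
      fun n : Fin N => ball (mcurve d (x i n)) δ) := by
    intro i n n' hne
    refine ball_disjoint_ball ?_
    have h1 : |x i n - x i n'| ≤ dist (mcurve d (x i n)) (mcurve d (x i n')) := by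
      rw [dist_eq_norm]
      have : x i n - x i n' = (mcurve d (x i n) - mcurve d (x i n')) ⟨0, hd⟩ := by
        simp [mcurve]
      rw [this]
      exact coord_le_norm _ _
    have h2 := hsep i n n' hne
    linarith [hδsep]
  have htotal : ∀ i, μ i Set.univ = (N : ℝ≥0∞) * v := by
    intro i
    rw [hμdef, Measure.restrict_apply_univ, hUdef]
    rw [measure_iUnion (hdisj i) fun n => measurableSet_ball]
    rw [tsum_fintype]
    simp only [hball]
    rw [Finset.sum_const, Finset.card_univ, Fintype.card_fin, nsmul_eq_mul]
  have horthmass : ∀ i ε, μ i (openOrthant u c ε) = (N : ℝ≥0∞) * v / 2 ^ k := by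
    intro i ε
    rw [heq i ε, htotal i]
  have hbig : ((k * d : ℕ) : ℝ≥0∞) * v < (N : ℝ≥0∞) * v / 2 ^ k := by
    rw [ENNReal.lt_div_iff_mul_lt (Or.inl (by positivity)) (Or.inl (by simp))]
    have hstep : ((k * d : ℕ) : ℝ≥0∞) * v * 2 ^ k = ((2 ^ k * (k * d) : ℕ) : ℝ≥0∞) * v := by
      push_cast
      ring
    rw [hstep]
    refine ENNReal.mul_lt_mul_left hv0 hvtop ?_
    exact_mod_cast Nat.lt_succ_self _
  -- witness extraction: for each measure and sign pattern, a good node realizing it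
  set pat : ℝ → (Fin k → Bool) := fun t m => decide (0 < (P m).eval t) with hpatdef
  have hwitness : ∀ (i : Fin j) (ε : Fin k → Bool),
      ∃ n : Fin N, n ∉ Bad i ∧ pat (x i n) = ε := by
    intro i ε
    set Bset : Set (EuclideanSpace ℝ (Fin d)) :=
      ⋃ n ∈ (Bad i : Set (Fin N)), ball (mcurve d (x i n)) δ with hBsetdef
    have hBmeas : MeasurableSet Bset :=
      MeasurableSet.biUnion ((Bad i : Set (Fin N)).to_countable)
        (fun n _ => measurableSet_ball)
    have hBmass : μ i Bset ≤ ((k * d : ℕ) : ℝ≥0∞) * v := by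
      rw [hμdef, Measure.restrict_apply hBmeas]
      refine le_trans (measure_mono Set.inter_subset_left) ?_
      have : Bset = ⋃ n ∈ Bad i, ball (mcurve d (x i n)) δ := rfl
      rw [this]
      refine le_trans (measure_biUnion_finset_le _ _) ?_
      calc ∑ n ∈ Bad i, volume (ball (mcurve d (x i n)) δ)
          = ∑ _n ∈ Bad i, v := Finset.sum_congr rfl fun n _ => hball _
      _ = ((Bad i).card : ℝ≥0∞) * v := by rw [Finset.sum_const, nsmul_eq_mul]
      _ ≤ ((k * d : ℕ) : ℝ≥0∞) * v := by
          apply mul_le_mul_left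
          exact_mod_cast hBadcard i
    have hposrest : μ i (openOrthant u c ε \ Bset) ≠ 0 := by
      intro hzero
      have hle : μ i (openOrthant u c ε) ≤ μ i Bset := by
        calc μ i (openOrthant u c ε)
            ≤ μ i ((openOrthant u c ε \ Bset) ∪ Bset) :=
              measure_mono (by intro y hy; by_cases hyB : y ∈ Bset
                               · exact Or.inr hyB
                               · exact Or.inl ⟨hy, hyB⟩)
        _ ≤ μ i (openOrthant u c ε \ Bset) + μ i Bset := measure_union_le _ _
        _ = μ i Bset := by rw [hzero, zero_add]
      rw [horthmass i ε] at hle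
      exact absurd (lt_of_lt_of_le (lt_of_le_of_lt hBmass hbig) hle) (lt_irrefl _)
    have hmeas2 : MeasurableSet (openOrthant u c ε \ Bset) :=
      ((isOpen_openOrthant u c ε).measurableSet).diff hBmeas
    rw [hμdef, Measure.restrict_apply hmeas2] at hposrest
    obtain ⟨y, hy⟩ := nonempty_of_measure_ne_zero hposrest
    obtain ⟨⟨hyO, hyB⟩, hyU⟩ := hy
    rw [hUdef] at hyU
    obtain ⟨n, hn⟩ := Set.mem_iUnion.1 hyU
    have hngood : n ∉ Bad i := by
      intro hnB
      exact hyB (Set.mem_biUnion hnB hn)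
    refine ⟨n, hngood, ?_⟩
    -- derive the exact sign pattern at the good node
    have hgood : ∀ m, δ < |(P m).eval (x i n)| := by
      intro m
      by_contra hcon
      push_neg at hcon
      exact hngood (by rw [hBdef]; exact Finset.mem_filter.2 ⟨Finset.mem_univ _, ⟨m, hcon⟩⟩)
    funext m
    have hsign := hyO m
    have hclose : |((inner ℝ (u m) y : ℝ) - c m) - (P m).eval (x i n)| < δ := by
      rw [hPdef, mpoly_eval]
      have : ((inner ℝ (u m) y : ℝ) - c m) - ((inner ℝ (u m) (mcurve d (x i n)) : ℝ) - c m)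
          = (inner ℝ (u m) (y - mcurve d (x i n)) : ℝ) := by
        rw [inner_sub_right]; ring
      rw [this]
      calc |(inner ℝ (u m) (y - mcurve d (x i n)) : ℝ)|
          ≤ ‖u m‖ * ‖y - mcurve d (x i n)‖ := abs_real_inner_le_norm _ _
      _ = ‖y - mcurve d (x i n)‖ := by rw [hunit m, one_mul]
      _ < δ := by rw [← dist_eq_norm]; exact mem_ball.1 hn
    rw [hpatdef]
    show decide (0 < (P m).eval (x i n)) = ε m
    have habs := abs_lt.1 hclose
    cases hb : ε m with
    | false =>
      rw [hb] at hsign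
      have h' : (-1 : ℝ) * ((inner ℝ (u m) y : ℝ) - c m) > 0 := by simpa using hsign
      have hq : (inner ℝ (u m) y : ℝ) - c m < 0 := by linarith
      simp only [decide_eq_false_iff_not, not_lt]
      by_contra hcon2
      push_neg at hcon2
      have hg := hgood m
      rw [abs_of_pos hcon2] at hg
      linarith
    | true =>
      rw [hb] at hsign
      have hq : (0:ℝ) < (inner ℝ (u m) y : ℝ) - c m := by simpa using hsign
      simp only [decide_eq_true_eq]
      by_contra hcon2
      push_neg at hcon2
      have hg := hgood m
      rw [abs_of_nonpos hcon2] at hg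
      linarith
  -- per-measure gap structure
  have hgaps : ∀ i : Fin j, ∃ t : Fin (2^k) → ℝ, StrictMono t ∧
      (∀ l, t l ∈ Set.Ioo ((i:ℕ):ℝ) (((i:ℕ):ℝ)+1)) ∧
      ∀ l : Fin (2^k - 1), ∃ m r, (P m).eval r = 0 ∧
        r ∈ Set.Ioo (t ⟨(l:ℕ), by have := l.2; omega⟩) (t ⟨(l:ℕ)+1, by have := l.2; omega⟩) := by
    intro i
    choose w hw using hwitness i
    have hwinj : Function.Injective fun ε => x i (w ε) := by
      intro a b hab
      have hab' : x i (w a) = x i (w b) := hab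
      have hpp : pat (x i (w a)) = pat (x i (w b)) := by rw [hab']
      rw [(hw a).2, (hw b).2] at hpp
      exact hpp
    set W : Finset ℝ := Finset.image (fun ε => x i (w ε)) Finset.univ with hWdef
    have hWcard : W.card = 2^k := by
      rw [hWdef, Finset.card_image_of_injective _ hwinj, Finset.card_univ]
      simp
    set oi := W.orderIsoOfFin hWcard with hoidef
    have hWmem : ∀ τ ∈ W, ∃ ε, x i (w ε) = τ := by
      intro τ hτ
      obtain ⟨ε, _, hε⟩ := Finset.mem_image.1 hτ
      exact ⟨ε, hε⟩
    refine ⟨fun l => (oi l : ℝ), ?_, ?_, ?_⟩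
    · intro a b hab
      exact Subtype.coe_lt_coe.2 (oi.lt_iff_lt.2 hab)
    · intro l
      obtain ⟨ε, hε⟩ := hWmem _ (oi l).2
      show ((oi l : ℝ)) ∈ Set.Ioo _ _
      rw [← hε]
      exact hmem i (w ε)
    · intro l
      set a : Fin (2^k) := ⟨(l:ℕ), by have := l.2; omega⟩ with hadef
      set b : Fin (2^k) := ⟨(l:ℕ)+1, by have := l.2; omega⟩ with hbdef
      have hab : ((oi a : ℝ)) < (oi b : ℝ) := by
        refine Subtype.coe_lt_coe.2 (oi.lt_iff_lt.2 ?_)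
        rw [hadef, hbdef]
        exact Fin.mk_lt_mk.2 (Nat.lt_succ_self _)
      obtain ⟨εa, hεa⟩ := hWmem _ (oi a).2
      obtain ⟨εb, hεb⟩ := hWmem _ (oi b).2
      have hpa : pat ((oi a : ℝ)) = εa := by rw [← hεa]; exact (hw εa).2
      have hpb : pat ((oi b : ℝ)) = εb := by rw [← hεb]; exact (hw εb).2
      have hεne : εa ≠ εb := by
        intro hcon
        rw [hcon] at hεa
        rw [← hεa, ← hεb] at hab
        exact lt_irrefl _ hab
      obtain ⟨m, hm⟩ := Function.ne_iff.1 hεne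
      have hgooda : δ < |(P m).eval ((oi a : ℝ))| := by
        rw [← hεa]
        by_contra hcon
        push_neg at hcon
        exact (hw εa).1 (by rw [hBdef]; exact Finset.mem_filter.2 ⟨Finset.mem_univ _, ⟨m, hcon⟩⟩)
      have hgoodb : δ < |(P m).eval ((oi b : ℝ))| := by
        rw [← hεb]
        by_contra hcon
        push_neg at hcon
        exact (hw εb).1 (by rw [hBdef]; exact Finset.mem_filter.2 ⟨Finset.mem_univ _, ⟨m, hcon⟩⟩)
      have hda : decide (0 < (P m).eval ((oi a : ℝ))) = εa m := congrFun hpa m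
      have hdb : decide (0 < (P m).eval ((oi b : ℝ))) = εb m := congrFun hpb m
      have hcont : ContinuousOn (fun t => (P m).eval t) (Set.Icc ((oi a : ℝ)) ((oi b : ℝ))) :=
        (P m).continuous_aeval.continuousOn
      cases hba : εa m with
      | true =>
        have hsa : 0 < (P m).eval ((oi a : ℝ)) := of_decide_eq_true (by rw [hda, hba])
        have hsbn : ¬ (0 < (P m).eval ((oi b : ℝ))) := by
          intro hcon
          have : εb m = true := by rw [← hdb, decide_eq_true_eq]; exact hcon
          rw [hba, this] at hm
          exact hm rfl
        push_neg at hsbn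
        have hsb : (P m).eval ((oi b : ℝ)) < 0 := by
          rcases lt_or_eq_of_le hsbn with h1 | h1
          · exact h1
          · rw [h1] at hgoodb; simp at hgoodb; linarith
        have := intermediate_value_Ioo' (le_of_lt hab) hcont
        obtain ⟨r, hr1, hr2⟩ := this ⟨hsb, hsa⟩
        exact ⟨m, r, hr2, hr1⟩
      | false =>
        have hsan : ¬ (0 < (P m).eval ((oi a : ℝ))) := by
          intro hcon
          have : εa m = true := by rw [← hda, decide_eq_true_eq]; exact hcon
          rw [this] at hba
          exact Bool.noConfusion hba
        push_neg at hsan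
        have hsa : (P m).eval ((oi a : ℝ)) < 0 := by
          rcases lt_or_eq_of_le hsan with h1 | h1
          · exact h1
          · rw [h1] at hgooda; simp at hgooda; linarith
        have hsb : 0 < (P m).eval ((oi b : ℝ)) := by
          have : εb m = true := by
            cases hbb : εb m with
            | true => rfl
            | false => rw [hba, hbb] at hm; exact absurd rfl hm
          have := hdb.trans this
          exact of_decide_eq_true this
        have := intermediate_value_Ioo (le_of_lt hab) hcont
        obtain ⟨r, hr1, hr2⟩ := this ⟨hsa, hsb⟩
        exact ⟨m, r, hr2, hr1⟩
  -- extract data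
  choose T hTmono hTmem hTroot using hgaps
  choose M R hReval hRmem using fun (p : Fin j × Fin (2^k - 1)) => hTroot p.1 p.2
  -- counting
  set S : Finset (Fin k × ℝ) := Finset.univ.biUnion
    (fun m : Fin k => ((P m).roots.toFinset).image (fun r => (m, r))) with hSdef
  have hFS : ∀ p : Fin j × Fin (2^k - 1), (M p, R p) ∈ S := by
    intro p
    refine Finset.mem_biUnion.2 ⟨M p, Finset.mem_univ _, Finset.mem_image.2 ⟨R p, ?_, rfl⟩⟩
    rw [Multiset.mem_toFinset, Polynomial.mem_roots']
    exact ⟨hPne _, hReval p⟩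
  have hRIoo : ∀ p : Fin j × Fin (2^k - 1),
      R p ∈ Set.Ioo ((p.1 : ℕ):ℝ) (((p.1 : ℕ):ℝ)+1) := by
    intro p
    have h1 := hRmem p
    have h2 := hTmem p.1 ⟨(p.2 : ℕ), by have := p.2.2; omega⟩
    have h3 := hTmem p.1 ⟨(p.2 : ℕ)+1, by have := p.2.2; omega⟩
    exact ⟨lt_trans h2.1 h1.1, lt_trans h1.2 h3.2⟩
  have hinj : Function.Injective (fun p : Fin j × Fin (2^k - 1) => ((M p, R p) : Fin k × ℝ)) := by
    intro p q hpq
    have hMR : M p = M q ∧ R p = R q := by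
      have h1 : (M p, R p) = (M q, R q) := hpq
      exact ⟨congrArg Prod.fst h1, congrArg Prod.snd h1⟩
    obtain ⟨_, hRR⟩ := hMR
    have hi : p.1 = q.1 := by
      have h1 := hRIoo p
      have h2 := hRIoo q
      rw [hRR] at h1
      have p1 : ((p.1:ℕ):ℝ) < ((q.1:ℕ):ℝ) + 1 := lt_trans h1.1 h2.2
      have p2 : ((q.1:ℕ):ℝ) < ((p.1:ℕ):ℝ) + 1 := lt_trans h2.1 h1.2
      have q1 : (p.1:ℕ) < (q.1:ℕ) + 1 := by exact_mod_cast p1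
      have q2 : (q.1:ℕ) < (p.1:ℕ) + 1 := by exact_mod_cast p2
      exact Fin.ext (by omega)
    have hl : p.2 = q.2 := by
      by_contra hne
      have hlN : (p.2:ℕ) ≠ (q.2:ℕ) := fun hc => hne (Fin.ext hc)
      have h1 := hRmem p
      have h2 := hRmem q
      rw [← hRR, ← hi] at h2
      rcases Nat.lt_or_ge (p.2:ℕ) (q.2:ℕ) with hlt | hge
      · have : T p.1 ⟨(p.2:ℕ)+1, by have := p.2.2; omega⟩ ≤ T p.1 ⟨(q.2:ℕ), by have := q.2.2; omega⟩ :=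
          (hTmono p.1).monotone (by rw [Fin.mk_le_mk]; omega)
        have := lt_of_lt_of_le h1.2 this
        linarith [h2.1, this]
      · have hgt : (q.2:ℕ) < (p.2:ℕ) := by omega
        have : T p.1 ⟨(q.2:ℕ)+1, by have := q.2.2; omega⟩ ≤ T p.1 ⟨(p.2:ℕ), by have := p.2.2; omega⟩ :=
          (hTmono p.1).monotone (by rw [Fin.mk_le_mk]; omega)
        have := lt_of_lt_of_le h2.2 this
        linarith [h1.1, this]
    exact Prod.ext hi hl
  have hcount : j * (2^k - 1) ≤ k * d := by
    have hle : (Finset.univ : Finset (Fin j × Fin (2^k - 1))).card ≤ S.card := by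
      apply Finset.card_le_card_of_injOn (fun p => (M p, R p))
      · intro p _; exact hFS p
      · intro a _ b _ hab; exact hinj hab
    have hSle : S.card ≤ k * d := by
      rw [hSdef]
      refine le_trans Finset.card_biUnion_le ?_
      have hone : ∀ m : Fin k, (((P m).roots.toFinset).image (fun r => ((m, r) : Fin k × ℝ))).card ≤ d := by
        intro m
        calc (((P m).roots.toFinset).image (fun r => ((m, r) : Fin k × ℝ))).card
            ≤ ((P m).roots.toFinset).card := Finset.card_image_le
        _ ≤ Multiset.card (P m).roots := Multiset.toFinset_card_le _
        _ ≤ (P m).natDegree := (P m).card_roots'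
        _ ≤ d := by rw [hPdef]; exact mpoly_natDegree_le _ _
      calc ∑ m : Fin k, (((P m).roots.toFinset).image (fun r => ((m, r) : Fin k × ℝ))).card
          ≤ ∑ _m : Fin k, d := Finset.sum_le_sum fun m _ => hone m
      _ = k * d := by simp [Finset.sum_const, Finset.card_univ]
    rw [Finset.card_univ, Fintype.card_prod, Fintype.card_fin, Fintype.card_fin] at hle
    exact le_trans hle hSle
  rw [mul_comm k d] at hcount
  omega

end
end

section
/- Let 𝒵 denote the abelian group ℤ equipped with the D_8-action in which every rotation acts by +1 and every reflection acts by −1 (the action through the character χ : D_8 → {±1} sending the three generating reflections α, β, γ to −1). Then the first group homology H_1(D_8; 𝒵) is isomorphic to ℤ/4. -/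
/-- The dihedral group of order 8 (symmetries of a square); `r i` are the rotations and
`sr i` the reflections. -/
abbrev D8 := DihedralGroup 4

/-- The character `χ : D8 → {±1}` defining the `D8`-module `𝒵`: every rotation acts
by `+1` and every reflection acts by `−1` (in particular the three generating
reflections `α, β, γ` act by `−1`). -/
def signChar : D8 → ℤ
  | DihedralGroup.r _ => 1
  | DihedralGroup.sr _ => -1

/-- The differential `∂₁ : C₁ → C₀` of the inhomogeneous chain complex computing the group
homology of `D8` with coefficients in `𝒵` (the integers with the action given by
`signChar`): on a generator `g ⊗ m` it is `g • m − m = signChar g * m − m`. -/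
noncomputable def d1 : (D8 →₀ ℤ) →+ ℤ :=
  Finsupp.liftAddHom fun g => AddMonoidHom.mulLeft (signChar g) - AddMonoidHom.id ℤ

/-- The differential `∂₂ : C₂ → C₁` of the inhomogeneous chain complex computing the group
homology of `D8` with coefficients in `𝒵` (action given by `signChar`): on a generator
`(g, h) ⊗ m` it is `h ⊗ (g • m) − (g*h) ⊗ m + g ⊗ m`. -/
noncomputable def d2 : (D8 × D8 →₀ ℤ) →+ (D8 →₀ ℤ) :=
  Finsupp.liftAddHom fun p =>
    (Finsupp.singleAddHom p.2).comp (AddMonoidHom.mulLeft (signChar p.1))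
      - Finsupp.singleAddHom (p.1 * p.2) + Finsupp.singleAddHom p.1

/-- The first group homology `H₁(D8; 𝒵)`, where `𝒵` is `ℤ` with rotations acting by `+1`
and reflections by `−1`: 1-cycles modulo 1-boundaries of the inhomogeneous chain complex. -/
noncomputable def H1sign : Type :=
  d1.ker ⧸ (d2.range.addSubgroupOf d1.ker)

noncomputable instance : AddCommGroup H1sign :=
  QuotientAddGroup.Quotient.addCommGroup _

/-! ### Auxiliary material for the proof -/

/-- The twisted 1-cocycle `D8 → ℤ/4` detecting the generator of `H₁`: rotations `r i ↦ i`,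
reflections `sr i ↦ -i`. -/
def wt : D8 → ZMod 4
  | DihedralGroup.r i => i
  | DihedralGroup.sr i => -i

/-- The homomorphism `C₁ → ℤ/4` induced by `wt`. -/
noncomputable def psi : (D8 →₀ ℤ) →+ ZMod 4 :=
  Finsupp.liftAddHom fun g => zmultiplesHom (ZMod 4) (wt g)

lemma d1_single (g : D8) (m : ℤ) : d1 (Finsupp.single g m) = signChar g * m - m := by
  simp [d1, AddMonoidHom.sub_apply]

lemma d2_single (g h : D8) (m : ℤ) :
    d2 (Finsupp.single (g, h) m)
      = Finsupp.single h (signChar g * m) - Finsupp.single (g * h) m + Finsupp.single g m := by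
  simp [d2, AddMonoidHom.sub_apply, AddMonoidHom.add_apply]

lemma psi_single (g : D8) (m : ℤ) : psi (Finsupp.single g m) = m • wt g := by
  simp [psi]

lemma cocycle (g h : D8) : (signChar g) • wt h - wt (g * h) + wt g = 0 := by
  revert g h; decide

open DihedralGroup Finsupp in
lemma psi_d2 (x : D8 × D8 →₀ ℤ) : psi (d2 x) = 0 := by
  have h : psi.comp d2 = 0 := by
    apply Finsupp.addHom_ext
    rintro ⟨g, h⟩ m
    simp only [AddMonoidHom.comp_apply, d2_single, map_add, map_sub, psi_single,
      AddMonoidHom.zero_apply, Finsupp.coe_zero]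
    rw [mul_comm, mul_smul, ← smul_sub, ← smul_add, cocycle, smul_zero]
  calc psi (d2 x) = (psi.comp d2) x := rfl
    _ = 0 := by rw [h]; rfl

open DihedralGroup in
lemma key (f : D8 →₀ ℤ) (h1 : d1 f = 0) (h2 : psi f = 0) : f ∈ d2.range := by
  have hf : f = Finsupp.single (r 0) (f (r 0)) + Finsupp.single (r 1) (f (r 1))
      + Finsupp.single (r 2) (f (r 2)) + Finsupp.single (r 3) (f (r 3))
      + Finsupp.single (sr 0) (f (sr 0)) + Finsupp.single (sr 1) (f (sr 1))
      + Finsupp.single (sr 2) (f (sr 2)) + Finsupp.single (sr 3) (f (sr 3)) := by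
    ext g
    rcases g with i | i <;> fin_cases i <;>
      simp (config := { decide := true }) [Finsupp.single_apply] <;> rfl
  have h1' : f (sr 0) + f (sr 1) + f (sr 2) + f (sr 3) = 0 := by
    rw [hf] at h1
    simp only [map_add, d1_single, signChar] at h1
    omega
  have hN : ((f (r 1) + 2*f (r 2) + 3*f (r 3) - f (sr 1) - 2*f (sr 2) - 3*f (sr 3) : ℤ)
      : ZMod 4) = 0 := by
    rw [hf] at h2
    simp only [map_add, psi_single, wt, zsmul_eq_mul] at h2
    push_cast
    linear_combination h2
  obtain ⟨k, hk⟩ := (ZMod.intCast_zmod_eq_zero_iff_dvd _ 4).mp hN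
  refine ⟨Finsupp.single ((r 0 : D8), (r 0 : D8)) (f (r 0) + k)
    + Finsupp.single ((r 1 : D8), (r 1 : D8)) (-f (r 2) - f (r 3) + f (sr 2) + f (sr 3) + 2*k)
    + Finsupp.single ((r 2 : D8), (r 1 : D8)) (-f (r 3) + f (sr 3))
    + Finsupp.single ((r 2 : D8), (r 2 : D8)) k
    + Finsupp.single ((sr 0 : D8), (r 1 : D8)) (-f (sr 1))
    + Finsupp.single ((sr 0 : D8), (r 2 : D8)) (-f (sr 2))
    + Finsupp.single ((sr 0 : D8), (r 3 : D8)) (-f (sr 3)), ?_⟩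
  conv_rhs => rw [hf]
  simp only [map_add, d2_single, signChar]
  ext g
  rcases g with i | i <;> fin_cases i <;>
    simp (config := { decide := true }) [Finsupp.single_apply, r_mul_r, sr_mul_r] <;>
    omega

/-- `H₁(D₈; 𝒵) ≅ ℤ/4` : the first group homology of the dihedral group of order 8 with
coefficients in `ℤ` twisted by the sign character (rotations act by `+1`, reflections by
`−1`) is isomorphic to `ℤ/4`. -/
theorem h1_d8_sign_int : Nonempty (H1sign ≃+ ZMod 4) := by
  have hker : ∀ x ∈ d2.range.addSubgroupOf d1.ker, (psi.comp d1.ker.subtype) x = 0 := by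
    rintro ⟨x, hx⟩ hmem
    rw [AddSubgroup.mem_addSubgroupOf] at hmem
    obtain ⟨y, hy⟩ := hmem
    have hy' : d2 y = x := hy
    show psi x = 0
    rw [← hy']; exact psi_d2 y
  let φ : H1sign →+ ZMod 4 :=
    QuotientAddGroup.lift (d2.range.addSubgroupOf d1.ker) (psi.comp d1.ker.subtype) hker
  have hinj : Function.Injective φ := by
    rw [injective_iff_map_eq_zero]
    intro a
    refine QuotientAddGroup.induction_on a ?_
    rintro ⟨z, hz⟩ hz0
    have hpz : psi z = 0 := hz0
    refine (QuotientAddGroup.eq_zero_iff (N := d2.range.addSubgroupOf d1.ker) _).mpr ?_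
    rw [AddSubgroup.mem_addSubgroupOf]
    exact key z hz hpz
  have hsurj : Function.Surjective φ := by
    intro x
    have hmem : Finsupp.single ((DihedralGroup.r 1 : D8)) ((x.val : ℤ)) ∈ d1.ker := by
      simp [AddMonoidHom.mem_ker, d1_single, signChar]
    refine ⟨QuotientAddGroup.mk ⟨_, hmem⟩, ?_⟩
    show psi (Finsupp.single (DihedralGroup.r 1 : D8) ((x.val : ℤ))) = x
    rw [psi_single]
    show (x.val : ℤ) • (wt (DihedralGroup.r 1)) = x
    have h1 : wt (DihedralGroup.r 1 : D8) = 1 := rfl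
    rw [h1, zsmul_eq_mul, mul_one]
    push_cast
    exact ZMod.natCast_rightInverse x
  exact ⟨AddEquiv.ofBijective φ ⟨hinj, hsurj⟩⟩
end

section
/- For every integer m ≥ 1, the central binomial coefficient satisfies C(2m, m) = Σ_{k | m} 2k · Q(k), where the sum is over positive divisors k of m and Q(k) is the number of primitive balanced circular words of length 2k. -/
/-- Words of length `n` over the alphabet `{A, B}` are functions `ZMod n → Bool`. Two words
are cyclically equivalent if one is obtained from the other by a cyclic shift
`(C^r w) i = w (i + r)`; a circular word is an equivalence class. -/
def cyclicSetoid (n : ℕ) : Setoid (ZMod n → Bool) where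
  r w w' := ∃ r : ZMod n, ∀ i, w' i = w (i + r)
  iseqv := by
    refine ⟨fun w => ⟨0, fun i => by rw [add_zero]⟩, ?_, ?_⟩
    · rintro w w' ⟨r, h⟩
      exact ⟨-r, fun i => by rw [h (i + -r), neg_add_cancel_right]⟩
    · rintro w w' w'' ⟨r, h⟩ ⟨s, h'⟩
      exact ⟨s + r, fun i => by rw [h' i, h (i + s), add_assoc]⟩

/-- A word of length `2n` is balanced if the letter `A` (encoded `true`) occurs exactly
`n` times (and hence so does the letter `B`). -/
def BalancedWord (n : ℕ) (w : ZMod (2 * n) → Bool) : Prop :=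
  Nat.card {i : ZMod (2 * n) // w i = true} = n

/-- A word of length `m` is primitive if its cyclic-shift orbit has exactly `m` elements. -/
def PrimitiveWord {m : ℕ} (w : ZMod m → Bool) : Prop :=
  Nat.card {w' : ZMod m → Bool // (cyclicSetoid m).r w w'} = m

/-- A word `w` of length `n` is special if some cyclic shift of `w` equals its conjugate
`w*` (the word obtained by swapping the two letters): `C^r (w) = w*` for some `r`. -/
def SpecialWord {n : ℕ} (w : ZMod n → Bool) : Prop :=
  ∃ r : ZMod n, ∀ i, w (i + r) = ! w i

/-- `R n` is the number of balanced circular words of length `2n`: the number of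
cyclic-shift orbits of balanced words of length `2n`. -/
noncomputable def R (n : ℕ) : ℕ :=
  Nat.card (Quotient (Setoid.comap
    (Subtype.val : {w : ZMod (2 * n) → Bool // BalancedWord n w} → (ZMod (2 * n) → Bool))
    (cyclicSetoid (2 * n))))

/-- `P m` is the number of primitive circular words of length `m`: the number of
cyclic-shift orbits of primitive words of length `m`. -/
noncomputable def P (m : ℕ) : ℕ :=
  Nat.card (Quotient (Setoid.comap
    (Subtype.val : {w : ZMod m → Bool // PrimitiveWord w} → (ZMod m → Bool))
    (cyclicSetoid m)))

/-- `Q k` is the number of primitive balanced circular words of length `2k`: the number of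
cyclic-shift orbits of primitive balanced words of length `2k`. -/
noncomputable def Q (k : ℕ) : ℕ :=
  Nat.card (Quotient (Setoid.comap
    (Subtype.val : {w : ZMod (2 * k) → Bool // BalancedWord k w ∧ PrimitiveWord w} →
      (ZMod (2 * k) → Bool))
    (cyclicSetoid (2 * k))))

/-- `A m` is the number of `∗`-primitive circular words of length `2m`: the number of
cyclic-shift orbits of words of length `2m` that are both primitive and special. -/
noncomputable def A (m : ℕ) : ℕ :=
  Nat.card (Quotient (Setoid.comap
    (Subtype.val : {w : ZMod (2 * m) → Bool // PrimitiveWord w ∧ SpecialWord w} →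
      (ZMod (2 * m) → Bool))
    (cyclicSetoid (2 * m))))

set_option linter.unusedSectionVars false

section Per
variable {N : ℕ} [NeZero N]

def natFix (w : ZMod N → Bool) (t : ℕ) : Prop := ∀ i, w (i + (t : ZMod N)) = w i

lemma natFix_N (w : ZMod N → Bool) : natFix w N := by
  intro i; simp [ZMod.natCast_self]

noncomputable def per (w : ZMod N → Bool) : ℕ := sInf {t | 0 < t ∧ natFix w t}

lemma per_mem (w : ZMod N → Bool) : 0 < per w ∧ natFix w (per w) := by
  have hne : {t | 0 < t ∧ natFix w t}.Nonempty :=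
    ⟨N, Nat.pos_of_ne_zero (NeZero.ne N), natFix_N w⟩
  exact Nat.sInf_mem hne

lemma per_pos (w : ZMod N → Bool) : 0 < per w := (per_mem w).1
lemma per_fix (w : ZMod N → Bool) : natFix w (per w) := (per_mem w).2

lemma per_le (w : ZMod N → Bool) {t : ℕ} (ht : 0 < t) (h : natFix w t) : per w ≤ t :=
  Nat.sInf_le ⟨ht, h⟩

lemma natFix_mul {w : ZMod N → Bool} {t : ℕ} (h : natFix w t) (q : ℕ) :
    natFix w (t * q) := by
  induction q with
  | zero => intro i; simp
  | succ q ih =>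
    intro i
    have : ((t * (q + 1) : ℕ) : ZMod N) = ((t * q : ℕ) : ZMod N) + (t : ZMod N) := by
      push_cast; ring
    rw [this, ← add_assoc, h, ih]

lemma per_dvd {w : ZMod N → Bool} {t : ℕ} (h : natFix w t) : per w ∣ t := by
  set d := per w with hd
  have hfixr : natFix w (t % d) := by
    intro i
    have hmul := natFix_mul (per_fix w) (t / d)
    have hcast : (t : ZMod N) = ((t % d : ℕ) : ZMod N) + ((d * (t / d) : ℕ) : ZMod N) := by
      rw [← Nat.cast_add]; congr 1; exact (Nat.mod_add_div t d).symm
    have := h i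
    rw [hcast, ← add_assoc, hmul] at this
    exact this
  rcases Nat.eq_zero_or_pos (t % d) with h0 | hpos
  · exact Nat.dvd_of_mod_eq_zero h0
  · have h1 := per_le w hpos hfixr
    have h2 : t % d < d := Nat.mod_lt t (per_pos w)
    omega

lemma per_dvd_N (w : ZMod N → Bool) : per w ∣ N := per_dvd (natFix_N w)

lemma natFix_of_shift_eq {w : ZMod N → Bool} {a b : ℕ} (hab : a ≤ b)
    (h : ∀ i, w (i + (a : ZMod N)) = w (i + (b : ZMod N))) : natFix w (b - a) := by
  intro i
  have h2 := h (i - (a : ZMod N))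
  rw [sub_add_cancel] at h2
  have h3 : i + ((b - a : ℕ) : ZMod N) = i - (a : ZMod N) + (b : ZMod N) := by
    rw [Nat.cast_sub hab]; ring
  rw [h3, ← h2]

lemma card_orbit (w : ZMod N → Bool) :
    Nat.card {w' : ZMod N → Bool // (cyclicSetoid N).r w w'} = per w := by
  have hb : Function.Bijective
      (fun t : Fin (per w) =>
        (⟨fun i => w (i + (t.val : ZMod N)), ⟨(t.val : ZMod N), fun i => rfl⟩⟩ :
          {w' : ZMod N → Bool // (cyclicSetoid N).r w w'})) := by
    constructor
    · intro a b hab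
      simp only [Subtype.mk.injEq] at hab
      have h : ∀ i, w (i + (a.val : ZMod N)) = w (i + (b.val : ZMod N)) :=
        fun i => congrFun (f := fun i => w (i + (a.val : ZMod N))) (g := fun i => w (i + (b.val : ZMod N))) (congrArg Subtype.val hab) i
      by_contra hne
      have hne' : a.val ≠ b.val := fun hh => hne (Fin.ext hh)
      rcases le_total a.val b.val with hle | hle
      · have hfix := natFix_of_shift_eq hle h
        have := per_le w (by omega) hfix
        omega
      · have hfix := natFix_of_shift_eq hle (fun i => (h i).symm)
        have := per_le w (by omega) hfix
        omega
    · rintro ⟨w', r, h⟩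
      set d := per w with hd
      have hlt : r.val % d < d := Nat.mod_lt _ (per_pos w)
      refine ⟨⟨r.val % d, hlt⟩, ?_⟩
      apply Subtype.ext
      funext i
      have hcast : r = ((r.val % d : ℕ) : ZMod N) + ((d * (r.val / d) : ℕ) : ZMod N) := by
        rw [← Nat.cast_add]
        conv_lhs => rw [← ZMod.natCast_rightInverse r]
        congr 1; exact (Nat.mod_add_div r.val d).symm
      have hmul := natFix_mul (per_fix w) (r.val / d)
      show w (i + ((r.val % d : ℕ) : ZMod N)) = w' i
      rw [h i]
      conv_rhs => rw [hcast]
      rw [← add_assoc, hmul]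
  rw [← Nat.card_eq_of_bijective _ hb, Nat.card_eq_fintype_card, Fintype.card_fin]

lemma prim_iff (w : ZMod N → Bool) : PrimitiveWord w ↔ per w = N := by
  rw [PrimitiveWord, card_orbit]

end Per

section Proj
variable {N : ℕ} [NeZero N]

def projZ (D : ℕ) (i : ZMod N) : ZMod D := (i.val : ZMod D)

variable {D : ℕ} [NeZero D] (hDN : D ∣ N)
include hDN

lemma proj_natCast (t : ℕ) : projZ D ((t : ZMod N)) = (t : ZMod D) := by
  unfold projZ
  rw [ZMod.val_natCast]
  rw [ZMod.natCast_eq_natCast_iff]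
  exact Nat.mod_mod_of_dvd t hDN

lemma proj_add_cast (i : ZMod N) (t : ℕ) :
    projZ D (i + (t : ZMod N)) = projZ D i + (t : ZMod D) := by
  conv_lhs => rw [← ZMod.natCast_rightInverse i, ← Nat.cast_add, proj_natCast hDN]
  rw [Nat.cast_add]
  rfl

lemma proj_cast_val (j : ZMod D) : projZ D ((j.val : ZMod N)) = j := by
  rw [proj_natCast hDN, ZMod.natCast_rightInverse]

lemma proj_surj : Function.Surjective (projZ D : ZMod N → ZMod D) :=
  fun j => ⟨(j.val : ZMod N), proj_cast_val hDN j⟩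

omit hDN in
noncomputable def zmodSplit (hDN : D ∣ N) : ZMod N ≃ ZMod D × Fin (N / D) where
  toFun i := (projZ D i, ⟨i.val / D, by
    have h1 : D * (N / D) = N := Nat.mul_div_cancel' hDN
    have h2 : i.val < N := ZMod.val_lt i
    have hD : 0 < D := Nat.pos_of_ne_zero (NeZero.ne D)
    rw [Nat.div_lt_iff_lt_mul hD]
    calc i.val < N := h2
    _ = N / D * D := by rw [mul_comm] at h1; omega⟩)
  invFun x := ((x.2.val * D + x.1.val : ℕ) : ZMod N)
  left_inv i := by
    have : (projZ (N := N) D i).val = i.val % D := ZMod.val_natCast _ _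
    simp only [this]
    have h : i.val / D * D + i.val % D = i.val := Nat.div_add_mod' _ _
    rw [h, ZMod.natCast_rightInverse]
  right_inv := by
    rintro ⟨j, t⟩
    have hD : 0 < D := Nat.pos_of_ne_zero (NeZero.ne D)
    have h1 : D * (N / D) = N := Nat.mul_div_cancel' hDN
    have hx : t.val * D + j.val < N := by
      have h2 : j.val < D := ZMod.val_lt j
      have h3 : t.val + 1 ≤ N / D := t.isLt
      have h4 : (t.val + 1) * D ≤ (N / D) * D := Nat.mul_le_mul_right D h3
      rw [mul_comm] at h1
      nlinarith
    have hval : ((t.val * D + j.val : ℕ) : ZMod N).val = t.val * D + j.val :=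
      ZMod.val_cast_of_lt hx
    ext
    · show projZ D _ = j
      rw [proj_natCast hDN]
      push_cast
      simp [ZMod.natCast_self, ZMod.natCast_rightInverse]
    · show (((t.val * D + j.val : ℕ) : ZMod N).val / D : ℕ) = t.val
      rw [hval, mul_comm, Nat.mul_add_div hD, Nat.div_eq_of_lt (ZMod.val_lt j), add_zero]

omit hDN in
def prodSubtypeFst {α β : Type*} (p : α → Prop) : {x : α × β // p x.1} ≃ {a // p a} × β where
  toFun x := (⟨x.1.1, x.2⟩, x.1.2)
  invFun y := ⟨(y.1.1, y.2), y.1.2⟩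
  left_inv x := rfl
  right_inv y := rfl

lemma card_comp_proj (p : ZMod D → Prop) :
    Nat.card {i : ZMod N // p (projZ D i)} = (N / D) * Nat.card {j : ZMod D // p j} := by
  have e1 : {i : ZMod N // p (projZ D i)} ≃ {x : ZMod D × Fin (N / D) // p x.1} :=
    (zmodSplit hDN).subtypeEquiv (fun i => Iff.rfl)
  have e2 := prodSubtypeFst (β := Fin (N / D)) p
  rw [Nat.card_congr (e1.trans e2), Nat.card_prod, Nat.card_eq_fintype_card (α := Fin (N/D)),
    Fintype.card_fin, mul_comm]

end Proj

section Core
variable {N : ℕ} [NeZero N] {D : ℕ} [NeZero D] (hDN : D ∣ N) {w : ZMod N → Bool}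
include hDN

omit hDN in
lemma natFix_mod_congr_le (hfix : natFix w D) {a b : ℕ} (hab : a ≤ b) (h : a % D = b % D) :
    w ((a : ZMod N)) = w ((b : ZMod N)) := by
  obtain ⟨c, hc⟩ := (Nat.modEq_iff_dvd' hab).mp h
  have hb : b = a + D * c := by omega
  have hcast : ((b : ℕ) : ZMod N) = (a : ZMod N) + ((D * c : ℕ) : ZMod N) := by
    rw [hb]; push_cast; ring
  rw [hcast, natFix_mul hfix c]

omit hDN in
lemma natFix_mod_congr (hfix : natFix w D) {a b : ℕ} (h : a % D = b % D) :
    w ((a : ZMod N)) = w ((b : ZMod N)) := by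
  rcases le_total a b with hab | hab
  · exact natFix_mod_congr_le hfix hab h
  · exact (natFix_mod_congr_le hfix hab h.symm).symm

omit hDN in
def wcore {N : ℕ} (D : ℕ) (w : ZMod N → Bool) : ZMod D → Bool :=
  fun j => w ((j.val : ZMod N))

omit hDN in
lemma wcore_proj (hfix : natFix w D) (i : ZMod N) : wcore D w (projZ D i) = w i := by
  unfold wcore projZ
  rw [ZMod.val_natCast]
  conv_rhs => rw [← ZMod.natCast_rightInverse i]
  exact natFix_mod_congr hfix (Nat.mod_mod_of_dvd _ dvd_rfl)

lemma natFix_wcore_iff (hfix : natFix w D) (t : ℕ) :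
    natFix (wcore D w) t ↔ natFix w t := by
  constructor
  · intro h i
    have h1 := h (projZ D i)
    rw [← proj_add_cast hDN, wcore_proj hfix, wcore_proj hfix] at h1
    exact h1
  · intro h j
    unfold wcore
    have hval : (j + (t : ZMod D)).val % D = (j.val + t) % D := by
      rw [ZMod.val_add, ZMod.val_natCast, Nat.mod_mod_of_dvd _ dvd_rfl, Nat.add_mod,
        Nat.mod_mod_of_dvd _ dvd_rfl, ← Nat.add_mod]
    rw [natFix_mod_congr hfix hval]
    have : ((j.val + t : ℕ) : ZMod N) = ((j.val : ℕ) : ZMod N) + (t : ZMod N) := by push_cast; ring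
    rw [this, h]

omit hDN in
lemma per_eq_of_fix_iff {M K : ℕ} [NeZero M] [NeZero K] {u : ZMod M → Bool} {v : ZMod K → Bool}
    (h : ∀ t, natFix u t ↔ natFix v t) : per u = per v := by
  unfold per
  congr 1
  ext t
  simp only [Set.mem_setOf_eq, h]

lemma per_wcore (hfix : natFix w D) : per (wcore D w) = per w :=
  per_eq_of_fix_iff (natFix_wcore_iff hDN hfix)

end Core

section Core2
variable {N : ℕ} [NeZero N] {D : ℕ} [NeZero D] (hDN : D ∣ N)
include hDN

lemma card_true_wcore {w : ZMod N → Bool} (hfix : natFix w D) :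
    Nat.card {i : ZMod N // w i = true}
      = (N / D) * Nat.card {j : ZMod D // wcore D w j = true} := by
  rw [← card_comp_proj hDN (fun j => wcore D w j = true)]
  exact Nat.card_congr (Equiv.subtypeEquivRight (fun i => by rw [wcore_proj hfix i]))

lemma natFix_comp_iff (v : ZMod D → Bool) (t : ℕ) :
    natFix (fun i : ZMod N => v (projZ D i)) t ↔ natFix v t := by
  constructor
  · intro h j
    have h2 := h ((j.val : ZMod N))
    change v (projZ D ((j.val : ZMod N) + (t : ZMod N))) = v (projZ D ((j.val : ZMod N))) at h2
    rwa [proj_add_cast hDN, proj_cast_val hDN] at h2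
  · intro h i
    simp only
    rw [proj_add_cast hDN, h]

lemma per_comp (v : ZMod D → Bool) : per (fun i : ZMod N => v (projZ D i)) = per v :=
  per_eq_of_fix_iff (natFix_comp_iff hDN v)

end Core2

section Inv
variable {N : ℕ} [NeZero N]

lemma bal_card_invariant {v u : ZMod N → Bool} (h : (cyclicSetoid N).r v u) :
    Nat.card {i : ZMod N // u i = true} = Nat.card {i : ZMod N // v i = true} := by
  obtain ⟨s, hs⟩ := h
  have e1 : {i : ZMod N // u i = true} ≃ {i : ZMod N // v (i + s) = true} :=
    Equiv.subtypeEquivRight (fun i => by rw [hs i])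
  have e2 : {i : ZMod N // v (i + s) = true} ≃ {j : ZMod N // v j = true} :=
    (Equiv.addRight s).subtypeEquiv (fun i => Iff.rfl)
  exact Nat.card_congr (e1.trans e2)

lemma per_shift {v u : ZMod N → Bool} (h : (cyclicSetoid N).r v u) : per u = per v := by
  obtain ⟨s, hs⟩ := h
  apply per_eq_of_fix_iff
  intro t
  constructor
  · intro hf i
    have h2 := hf (i - s)
    simp only [hs] at h2
    have e1 : i - s + (t : ZMod N) + s = i + (t : ZMod N) := by ring
    have e2 : i - s + s = i := by ring
    rwa [e1, e2] at h2
  · intro hf i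
    simp only [hs]
    have e1 : i + (t : ZMod N) + s = (i + s) + (t : ZMod N) := by ring
    rw [e1, hf]

end Inv

lemma card_prim_bal (k : ℕ) (hk : 1 ≤ k) :
    Nat.card {v : ZMod (2 * k) → Bool // BalancedWord k v ∧ PrimitiveWord v}
      = Q k * (2 * k) := by
  classical
  haveI : NeZero (2 * k) := ⟨by omega⟩
  set S := {v : ZMod (2 * k) → Bool // BalancedWord k v ∧ PrimitiveWord v} with hS
  set s := Setoid.comap (Subtype.val : S → (ZMod (2 * k) → Bool)) (cyclicSetoid (2 * k)) with hs
  have h1 : (Finset.univ : Finset S).card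
      = ∑ q ∈ (Finset.univ : Finset (Quotient s)),
          (Finset.univ.filter (fun v : S => Quotient.mk s v = q)).card :=
    Finset.card_eq_sum_card_fiberwise (fun v _ => Finset.mem_univ _)
  have h2 : ∀ q : Quotient s,
      (Finset.univ.filter (fun v : S => Quotient.mk s v = q)).card = 2 * k := by
    intro q
    induction q using Quotient.ind with
    | _ v0 =>
      rw [← Fintype.card_subtype, ← Nat.card_eq_fintype_card]
      have e : {v : S // Quotient.mk s v = Quotient.mk s v0}
          ≃ {u : ZMod (2 * k) → Bool // (cyclicSetoid (2 * k)).r v0.val u} := by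
        refine Equiv.mk (fun v => ⟨v.val.val, ?_⟩) (fun u => ⟨⟨u.val, ?_, ?_⟩, ?_⟩) ?_ ?_
        · have hrel : s.r v.val v0 := Quotient.exact v.prop
          exact (cyclicSetoid (2 * k)).iseqv.symm hrel
        · rw [BalancedWord, bal_card_invariant u.prop]
          exact v0.prop.1
        · rw [PrimitiveWord, card_orbit, per_shift u.prop, ← card_orbit v0.val]
          exact v0.prop.2
        · exact Quotient.sound ((cyclicSetoid (2 * k)).iseqv.symm u.prop)
        · intro v; apply Subtype.ext; apply Subtype.ext; rfl
        · intro u; apply Subtype.ext; rfl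
      rw [Nat.card_congr e, card_orbit]
      exact (prim_iff v0.val).mp v0.prop.2
  have h3 : Nat.card S = Fintype.card S := Nat.card_eq_fintype_card
  rw [h3, ← Finset.card_univ, h1, Finset.sum_congr rfl (fun q _ => h2 q),
    Finset.sum_const, smul_eq_mul, Finset.card_univ, ← Nat.card_eq_fintype_card]
  rfl

lemma card_balanced (m : ℕ) (hm : 1 ≤ m) :
    Nat.card {w : ZMod (2 * m) → Bool // BalancedWord m w} = (2 * m).choose m := by
  classical
  haveI : NeZero (2 * m) := ⟨by omega⟩
  have e : {w : ZMod (2 * m) → Bool // BalancedWord m w}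
      ≃ {s : Finset (ZMod (2 * m)) // s.card = m} := by
    refine Equiv.mk
      (fun w => ⟨Finset.univ.filter (fun i => w.val i = true), ?_⟩)
      (fun s => ⟨fun i => decide (i ∈ s.val), ?_⟩) ?_ ?_
    · have := w.prop
      rwa [BalancedWord, Nat.card_eq_fintype_card, Fintype.card_subtype] at this
    · rw [BalancedWord]
      have e2 : {i : ZMod (2 * m) // decide (i ∈ s.val) = true} ≃ {i // i ∈ s.val} :=
        Equiv.subtypeEquivRight (fun i => by simp)
      rw [Nat.card_congr e2, Nat.card_eq_fintype_card, Fintype.card_coe]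
      exact s.prop
    · intro w
      apply Subtype.ext
      funext i
      simp [Finset.mem_filter]
    · intro s
      apply Subtype.ext
      ext i
      simp [Finset.mem_filter]
  rw [Nat.card_congr e, Nat.card_eq_fintype_card, Fintype.card_subtype]
  have h2 : Finset.univ.filter (fun s : Finset (ZMod (2 * m)) => s.card = m)
      = Finset.powersetCard m Finset.univ := by
    rw [Finset.powersetCard_eq_filter, Finset.powerset_univ]
  rw [h2, Finset.card_powersetCard, Finset.card_univ, ZMod.card]

lemma per_balanced {m : ℕ} [NeZero (2 * m)] {w : ZMod (2 * m) → Bool}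
    (hm : 1 ≤ m) (hw : BalancedWord m w) : ∃ c, per w = 2 * c ∧ c ∣ m := by
  haveI : NeZero (per w) := ⟨(per_pos w).ne'⟩
  have hdN : per w ∣ 2 * m := per_dvd_N w
  have h3 := card_true_wcore hdN (per_fix w)
  rw [BalancedWord] at hw
  set c := Nat.card {j : ZMod (per w) // wcore (per w) w j = true} with hc
  set q := 2 * m / per w with hq
  have hq1 : per w * q = 2 * m := Nat.mul_div_cancel' hdN
  have hm3 : m = q * c := by rw [← hw, h3]
  have hqpos : 0 < q := by
    by_contra h
    have h0 : q = 0 := Nat.le_zero.mp (Nat.not_lt.mp h)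
    rw [h0, mul_zero] at hq1
    omega
  have hd2 : per w = 2 * c := by
    refine Nat.eq_of_mul_eq_mul_right hqpos ?_
    rw [hq1, hm3]
    ring
  exact ⟨c, hd2, ⟨q, by rw [hm3, mul_comm]⟩⟩

lemma card_bal_per {m k : ℕ} (hm : 1 ≤ m) (hkm : k ∣ m) (hk : 1 ≤ k) :
    Nat.card {w : ZMod (2 * m) → Bool // BalancedWord m w ∧ per w = 2 * k}
      = Nat.card {v : ZMod (2 * k) → Bool // BalancedWord k v ∧ PrimitiveWord v} := by
  classical
  haveI : NeZero (2 * m) := ⟨by omega⟩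
  haveI : NeZero (2 * k) := ⟨by omega⟩
  have hDN : (2 * k) ∣ (2 * m) := mul_dvd_mul_left 2 hkm
  have hdiv : (2 * m) / (2 * k) = m / k := by
    rw [Nat.mul_div_mul_left _ _ (by norm_num)]
  have hmk : m / k * k = m := Nat.div_mul_cancel hkm
  have hmkpos : 0 < m / k := Nat.div_pos (Nat.le_of_dvd (by omega) hkm) hk
  symm
  apply Nat.card_congr
  refine Equiv.ofBijective (fun v =>
    ⟨fun i => v.val (projZ (2 * k) i), ?_, ?_⟩) ⟨?_, ?_⟩
  · rw [BalancedWord, card_comp_proj hDN (fun j => v.val j = true), hdiv]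
    have := v.prop.1
    rw [BalancedWord] at this
    rw [this, hmk]
  · rw [per_comp hDN]
    exact (prim_iff v.val).mp v.prop.2
  · intro v v' hvv'
    apply Subtype.ext
    funext j
    have h2 := congrFun (congrArg Subtype.val hvv') ((j.val : ZMod (2 * m)))
    change v.val (projZ (2 * k) ((j.val : ZMod (2 * m)))) =
      v'.val (projZ (2 * k) ((j.val : ZMod (2 * m)))) at h2
    rwa [proj_cast_val hDN] at h2
  · rintro ⟨w, hbal, hper⟩
    have hfix : natFix w (2 * k) := hper ▸ per_fix w
    have hbalv : BalancedWord k (wcore (2 * k) w) := by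
      have h3 := card_true_wcore hDN hfix
      rw [BalancedWord] at hbal ⊢
      rw [hbal, hdiv] at h3
      have h4 : m / k * k = m / k * Nat.card {j : ZMod (2*k) // wcore (2 * k) w j = true} := by
        rw [hmk, ← h3]
      exact (Nat.eq_of_mul_eq_mul_left hmkpos h4).symm
    have hprimv : PrimitiveWord (wcore (2 * k) w) := by
      rw [prim_iff, per_wcore hDN hfix, hper]
    refine ⟨⟨wcore (2 * k) w, hbalv, hprimv⟩, ?_⟩
    apply Subtype.ext
    funext i
    exact wcore_proj hfix i

/-- `C(2m, m) = Σ_{k | m} 2k · Q(k)`: the central binomial coefficient counts balanced words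
of length `2m` grouped by the primitive period of their cyclic-shift orbits. -/
theorem choose_eq_sum_Q (m : ℕ) (hm : 1 ≤ m) :
    (2 * m).choose m = ∑ k ∈ m.divisors, 2 * k * Q k := by
  classical
  haveI : NeZero (2 * m) := ⟨by omega⟩
  rw [← card_balanced m hm]
  have hmem : ∀ w : {w : ZMod (2 * m) → Bool // BalancedWord m w},
      per w.val / 2 ∈ m.divisors := by
    intro w
    obtain ⟨c, hc, hcm⟩ := per_balanced hm w.prop
    rw [hc, Nat.mul_div_cancel_left c (by norm_num)]
    exact Nat.mem_divisors.mpr ⟨hcm, by omega⟩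
  have h1 : Nat.card {w : ZMod (2 * m) → Bool // BalancedWord m w}
      = ∑ k ∈ m.divisors, (Finset.univ.filter
          (fun w : {w : ZMod (2 * m) → Bool // BalancedWord m w} => per w.val / 2 = k)).card := by
    rw [Nat.card_eq_fintype_card, ← Finset.card_univ]
    exact Finset.card_eq_sum_card_fiberwise (fun w _ => hmem w)
  rw [h1]
  apply Finset.sum_congr rfl
  intro k hk
  have hkm := (Nat.mem_divisors.mp hk).1
  have hk1 : 1 ≤ k := Nat.pos_of_mem_divisors hk
  rw [← Fintype.card_subtype, ← Nat.card_eq_fintype_card]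
  have e1 : {w : {w : ZMod (2 * m) → Bool // BalancedWord m w} // per w.val / 2 = k}
      ≃ {w : ZMod (2 * m) → Bool // BalancedWord m w ∧ per w = 2 * k} := by
    refine (Equiv.subtypeSubtypeEquivSubtypeInter
      (fun w : ZMod (2 * m) → Bool => BalancedWord m w)
      (fun w => per w / 2 = k)).trans (Equiv.subtypeEquivRight ?_)
    intro w
    constructor
    · rintro ⟨hb, hp⟩
      obtain ⟨c, hc, -⟩ := per_balanced hm hb
      exact ⟨hb, by omega⟩
    · rintro ⟨hb, hp⟩
      exact ⟨hb, by omega⟩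
  rw [Nat.card_congr e1, card_bal_per hm hkm hk1, card_prim_bal k hk1]
  ring
end

section
/- A balanced word w of length 2n (n ≥ 1) over the alphabet {A, B} is special — i.e., some cyclic shift of w equals its conjugate w* — if and only if w has the form (a a*)(a a*)⋯(a a*): there exist a word a and an integer t ≥ 1 with t·(length of a) = n such that w is the concatenation of t copies of the word a followed by its conjugate a*. -/
lemma getElem_congr_idx' (l : List Bool) {i j : ℕ} (h : i = j) {hi : i < l.length} :
    l[i]'hi = l[j]'(h ▸ hi) := by subst h; rfl

lemma length_flatten_replicate (t : ℕ) (u : List Bool) :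
    ((List.replicate t u).flatten).length = t * u.length := by
  induction t with
  | zero => simp
  | succ t ih =>
    rw [List.replicate_succ, List.flatten_cons, List.length_append, ih, Nat.succ_mul]
    omega

lemma getElem?_flatten_replicate (t : ℕ) (u : List Bool) (i : ℕ) (h1 : i < t * u.length) :
    ((List.replicate t u).flatten)[i]? = u[i % u.length]? := by
  induction t generalizing i with
  | zero => omega
  | succ t ih =>
    rw [List.replicate_succ, List.flatten_cons]
    by_cases hc : i < u.length
    · rw [List.getElem?_append_left hc, Nat.mod_eq_of_lt hc]
    · push_neg at hc
      have h1' : i - u.length < t * u.length := by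
        rw [Nat.succ_mul] at h1; omega
      rw [List.getElem?_append_right hc, ih (i - u.length) h1',
        Nat.mod_eq_sub_mod hc]

lemma getElem_flatten_replicate (t : ℕ) (u : List Bool) (i : ℕ) (h1 : i < t * u.length)
    (h2 : i % u.length < u.length) :
    ((List.replicate t u).flatten)[i]'(by rw [length_flatten_replicate]; exact h1) =
      u[i % u.length]'h2 := by
  have h := getElem?_flatten_replicate t u i h1
  rw [List.getElem?_eq_getElem (by rw [length_flatten_replicate]; exact h1),
    List.getElem?_eq_getElem h2] at h
  exact Option.some_injective _ h

/-- A balanced word `w` of length `2n` (`n ≥ 1`) over the alphabet `{A, B}` (modeled as a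
list of Booleans, with cyclic shift given by `List.rotate` and conjugation `w* = w.map not`)
is special — some cyclic shift of `w` equals its conjugate `w*` — if and only if `w` has the
form `(a a*)(a a*)⋯(a a*)`: there exist a word `a` and an integer `t ≥ 1` with
`t * a.length = n` such that `w` is the concatenation of `t` copies of `a ++ a*`. -/
theorem special_iff_replicate (n : ℕ) (hn : 1 ≤ n) (w : List Bool)
    (hlen : w.length = 2 * n) (hbal : w.count true = n) :
    (∃ r : ℕ, w.rotate r = w.map not) ↔
      ∃ (a : List Bool) (t : ℕ), 1 ≤ t ∧ t * a.length = n ∧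
        w = (List.replicate t (a ++ a.map not)).flatten := by
  have hL : 0 < 2 * n := by omega
  constructor
  · rintro ⟨r, hr⟩
    have hlt : ∀ i : ℕ, i % (2 * n) < w.length := by
      intro i; rw [hlen]; exact Nat.mod_lt _ hL
    set f : ℕ → Bool := fun i => w[i % (2 * n)]'(hlt i) with hfdef
    have hfmod : ∀ i, f (i % (2 * n)) = f i := by
      intro i
      simp only [hfdef]
      exact getElem_congr_idx' w (Nat.mod_mod_of_dvd _ dvd_rfl)
    -- index form of the hypothesis
    have H : ∀ i, f (i + r) = !(f i) := by
      intro i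
      have hi : i % (2 * n) < (w.rotate r).length := by
        rw [List.length_rotate]; exact hlt i
      have h1 : (w.rotate r)[i % (2 * n)]'hi = (w.map not)[i % (2 * n)]'(by
          rw [List.length_map]; exact hlt i) := by simp only [hr]
      rw [List.getElem_rotate, List.getElem_map] at h1
      simp only [hfdef]
      rw [← h1]
      exact getElem_congr_idx' w (by rw [hlen, Nat.mod_add_mod])
    have Q2r : ∀ i, f (i + 2 * r) = f i := by
      intro i
      have h2 := H (i + r)
      rw [show i + r + r = i + 2 * r by ring] at h2
      rw [h2, H i, Bool.not_not]
    set g := Nat.gcd r n with hgdef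
    have hgn : g ∣ n := Nat.gcd_dvd_right r n
    have hgr : g ∣ r := Nat.gcd_dvd_left r n
    have hgpos : 0 < g := Nat.gcd_pos_of_pos_right r (by omega)
    have hgle : g ≤ n := Nat.le_of_dvd (by omega) hgn
    -- Bezout: some multiple of 2r is ≡ 2g mod 2n
    have key : ∃ x : ℕ, (2 * g) % (2 * n) = (2 * r * x) % (2 * n) := by
      set A := Nat.gcdA r n
      set B := Nat.gcdB r n
      have hAB : (g : ℤ) = r * A + n * B := Nat.gcd_eq_gcd_ab r n
      refine ⟨(A % n).toNat, ?_⟩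
      have hnz : (n : ℤ) ≠ 0 := by exact_mod_cast (by omega : n ≠ 0)
      have hx : ((A % n).toNat : ℤ) = A % n :=
        Int.toNat_of_nonneg (Int.emod_nonneg A hnz)
      have hdvd : ((2 * n : ℕ) : ℤ) ∣ ((2 * r * (A % n).toNat : ℕ) : ℤ) - ((2 * g : ℕ) : ℤ) := by
        push_cast
        rw [hx, hAB, Int.emod_def]
        exact ⟨-(r * (A / n)) - B, by ring⟩
      exact Nat.modEq_iff_dvd.mpr hdvd
    obtain ⟨x, hx⟩ := key
    have Qpow : ∀ (y i : ℕ), f (i + 2 * r * y) = f i := by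
      intro y
      induction y with
      | zero => simp
      | succ y ih =>
        intro i
        rw [show i + 2 * r * (y + 1) = i + 2 * r * y + 2 * r by ring, Q2r, ih]
    have Qx : ∀ i, f (i + 2 * r * x) = f i := Qpow x
    have Q2g : ∀ i, f (i + 2 * g) = f i := by
      intro i
      calc f (i + 2 * g) = f ((i + 2 * g) % (2 * n)) := (hfmod _).symm
        _ = f ((i + 2 * r * x) % (2 * n)) := by rw [Nat.add_mod, hx, ← Nat.add_mod]
        _ = f (i + 2 * r * x) := hfmod _
        _ = f i := Qx i
    have Q2gm : ∀ m i, f (i + 2 * g * m) = f i := by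
      intro m
      induction m with
      | zero => simp
      | succ m ih =>
        intro i
        rw [show i + 2 * g * (m + 1) = i + 2 * g + 2 * g * m by ring, ih, Q2g]
    obtain ⟨k, hk⟩ := hgr
    have Hg : ∀ i, f (i + g) = !(f i) := by
      rcases Nat.even_or_odd k with ⟨m, hm⟩ | ⟨m, hm⟩
      · exfalso
        have h0 := H 0
        rw [show 0 + r = 0 + 2 * g * m by rw [hk, hm]; ring, Q2gm] at h0
        cases hfo : f 0 <;> rw [hfo] at h0 <;> simp at h0
      · intro i
        have h1 := H i
        rw [show i + r = (i + g) + 2 * g * m by rw [hk, hm]; ring, Q2gm] at h1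
        exact h1
    -- conclude
    refine ⟨w.take g, n / g, ?_, ?_, ?_⟩
    · exact (Nat.one_le_div_iff hgpos).mpr hgle
    · rw [List.length_take, hlen, min_eq_left (by omega), Nat.div_mul_cancel hgn]
    · set a := w.take g with hadef
      have halen : a.length = g := by
        rw [hadef, List.length_take, hlen, min_eq_left (by omega)]
      set u : List Bool := a ++ a.map not with hcdef
      have hclen : u.length = 2 * g := by
        rw [hcdef, List.length_append, List.length_map, halen]; ring
      have hng : (n / g) * g = n := Nat.div_mul_cancel hgn
      have htg : (n / g) * (2 * g) = 2 * n := by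
        rw [show (n / g) * (2 * g) = 2 * ((n / g) * g) by ring, hng]
      have ha_get : ∀ j (hj : j < g), a[j]'(by rw [halen]; exact hj) = f j := by
        intro j hj
        simp only [hadef, List.getElem_take, hfdef]
        exact getElem_congr_idx' w (Nat.mod_eq_of_lt (by omega)).symm
      apply List.ext_getElem
      · rw [hlen, length_flatten_replicate, hclen, htg]
      · intro i h1 h2
        rw [hlen] at h1
        have hrep := getElem_flatten_replicate (n / g) u i
          (by rw [hclen, htg]; exact h1) (by rw [hclen]; exact Nat.mod_lt _ (by omega))
        rw [hrep]
        have hwi : w[i]'(by omega) = f i := by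
          simp only [hfdef]
          exact getElem_congr_idx' w (Nat.mod_eq_of_lt h1).symm
        rw [hwi]
        set j := i % u.length with hjdef
        have hj2 : j < 2 * g := by rw [hjdef, hclen]; exact Nat.mod_lt _ (by omega)
        have hfij : f i = f j := by
          have : i = j + 2 * g * (i / (2 * g)) := by
            rw [hjdef, hclen]
            exact (Nat.mod_add_div i (2 * g)).symm
          rw [this, Q2gm]
        rw [hfij]
        by_cases hjg : j < g
        · rw [show u[j]'(hclen ▸ hj2) = a[j]'(by rw [halen]; exact hjg) from
            List.getElem_append_left (by rw [halen]; exact hjg)]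
          exact (ha_get j hjg).symm
        · push_neg at hjg
          rw [show u[j]'(hclen ▸ hj2) = (a.map not)[j - a.length]'(by
              rw [List.length_map, halen]; omega) from
            List.getElem_append_right (by rw [halen]; exact hjg)]
          rw [List.getElem_map, ha_get (j - a.length) (by omega)]
          have := Hg (j - a.length)
          rw [show j - a.length + g = j by omega] at this
          rw [this]
  · rintro ⟨a, t, ht, htn, rfl⟩
    set g := a.length with hgdef
    have hgpos : 0 < g := by
      rcases Nat.eq_zero_or_pos g with h | h
      · rw [h, Nat.mul_zero] at htn; omega
      · exact h
    set u : List Bool := a ++ a.map not with hcdef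
    have hclen : u.length = 2 * g := by
      rw [hcdef, List.length_append, List.length_map]; omega

    have hflat : t * u.length = 2 * n := by
      rw [hclen, show t * (2 * g) = 2 * (t * g) by ring, htn]
    have hWlen : ((List.replicate t u).flatten).length = 2 * n := by
      rw [length_flatten_replicate, hflat]
    have hdvd : 2 * g ∣ 2 * n := ⟨t, by rw [← htn]; ring⟩
    -- key pointwise fact about u
    have hc_key : ∀ j (hj : j < 2 * g), u[(j + g) % (2 * g)]'(by
        rw [hclen]; exact Nat.mod_lt _ (by omega)) = !(u[j]'(by omega)) := by
      intro j hj
      by_cases hjg : j < g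
      · have e1 : (j + g) % (2 * g) = j + g := Nat.mod_eq_of_lt (by omega)
        have h1 : u[(j + g) % (2 * g)]'(by rw [hclen]; exact Nat.mod_lt _ (by omega)) =
            u[j + g]'(by omega) := getElem_congr_idx' u e1
        rw [h1]
        rw [show u[j + g]'(by omega) = (a.map not)[j + g - g]'(by
            rw [List.length_map]; omega) from List.getElem_append_right (by omega)]
        rw [show u[j]'(by omega) = a[j]'(by omega) from List.getElem_append_left (by omega)]
        rw [List.getElem_map]
        have e2 : j + g - g = j := by omega
        exact congrArg _ (getElem_congr_idx' a e2)
      · push_neg at hjg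
        have e1 : (j + g) % (2 * g) = j - g := by
          rw [Nat.mod_eq_sub_mod (by omega), Nat.mod_eq_of_lt (by omega)]
          omega
        have h1 : u[(j + g) % (2 * g)]'(by rw [hclen]; exact Nat.mod_lt _ (by omega)) =
            u[j - g]'(by omega) := getElem_congr_idx' u e1
        rw [h1]
        rw [show u[j - g]'(by omega) = a[j - g]'(by omega) from
          List.getElem_append_left (by omega)]
        rw [show u[j]'(by omega) = (a.map not)[j - g]'(by
            rw [List.length_map]; omega) from List.getElem_append_right (by omega)]
        rw [List.getElem_map, Bool.not_not]
    refine ⟨g, ?_⟩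
    apply List.ext_getElem
    · rw [List.length_rotate, List.length_map]
    · intro i h1 h2
      rw [List.length_rotate, hWlen] at h1
      rw [List.getElem_rotate, List.getElem_map]
      have e0 : ((List.replicate t u).flatten).length = 2 * n := hWlen
      have hmlt : (i + g) % ((List.replicate t u).flatten).length <
          ((List.replicate t u).flatten).length := by
        rw [e0]; exact Nat.mod_lt _ hL
      have hrep1 : ((List.replicate t u).flatten)[(i + g) % ((List.replicate t u).flatten).length]'hmlt
          = u[((i + g) % (2 * n)) % u.length]'(by
            rw [hclen]; exact Nat.mod_lt _ (by omega)) := by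
        have := getElem_flatten_replicate t u ((i + g) % (2 * n))
          (by have h3 : (i + g) % (2 * n) < 2 * n := Nat.mod_lt _ hL
              omega)
          (by rw [hclen]; exact Nat.mod_lt _ (by omega))
        rw [← this]
        exact getElem_congr_idx' _ (by rw [e0])
      have hrep2 : ((List.replicate t u).flatten)[i]'(by rw [e0]; exact h1)
          = u[i % u.length]'(by rw [hclen]; exact Nat.mod_lt _ (by omega)) := by
        exact getElem_flatten_replicate t u i (by omega) (by
          rw [hclen]; exact Nat.mod_lt _ (by omega))
      rw [hrep1, hrep2]
      have e2 : ((i + g) % (2 * n)) % u.length = (i % u.length + g) % (2 * g) := by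
        rw [hclen, Nat.mod_mod_of_dvd _ hdvd, Nat.add_mod i g,
          Nat.mod_eq_of_lt (show g < 2 * g by omega)]
      have h3 : u[((i + g) % (2 * n)) % u.length]'(by
          rw [hclen]; exact Nat.mod_lt _ (by omega)) =
          u[(i % u.length + g) % (2 * g)]'(by
          rw [hclen]; exact Nat.mod_lt _ (by omega)) := getElem_congr_idx' u e2
      rw [h3]
      exact hc_key (i % u.length) (by rw [hclen]; exact Nat.mod_lt _ (by omega))
end

section
/- For every integer m ≥ 1, A(m) ≡ P(2m) (mod 2), where A(m) is the number of ∗-primitive circular words of length 2m (cyclic-shift orbits of words of length 2m that are both primitive and special) and P(2m) is the number of primitive circular words of length 2m. -/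
section AuxForAModeqP

open Function

lemma involutive_card_modEq {α : Type*} [Finite α] {f : α → α} (hf : Function.Involutive f) :
    Nat.card α ≡ Nat.card {x : α // f x = x} [MOD 2] := by
  letI : MulAction (Multiplicative (ZMod 2)) α :=
  { smul := fun x a => if Multiplicative.toAdd x = 0 then a else f a
    one_smul := fun a => if_pos rfl
    mul_smul := fun x y a => by
      show (if Multiplicative.toAdd (x * y) = 0 then a else f a) =
        (if Multiplicative.toAdd x = 0 then
          (if Multiplicative.toAdd y = 0 then a else f a)
          else f (if Multiplicative.toAdd y = 0 then a else f a))
      have hx : Multiplicative.toAdd x = 0 ∨ Multiplicative.toAdd x = 1 := by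
        revert x; decide
      have hy : Multiplicative.toAdd y = 0 ∨ Multiplicative.toAdd y = 1 := by
        revert y; decide
      rw [toAdd_mul]
      rcases hx with hx | hx <;> rcases hy with hy | hy <;>
        simp [hx, hy, hf a, show (1+1:ZMod 2)=0 from rfl] }
  haveI : Fact (Nat.Prime 2) := ⟨Nat.prime_two⟩
  have hp : IsPGroup 2 (Multiplicative (ZMod 2)) := by
    apply IsPGroup.of_card (n := 1)
    simp [Nat.card_eq_fintype_card]
  have h := hp.card_modEq_card_fixedPoints α
  refine h.trans ?_
  have : MulAction.fixedPoints (Multiplicative (ZMod 2)) α ≃ {x : α // f x = x} := by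
    apply Equiv.subtypeEquivRight
    intro a
    simp only [MulAction.mem_fixedPoints]
    constructor
    · intro h'
      have := h' (Multiplicative.ofAdd 1)
      change (if Multiplicative.toAdd (Multiplicative.ofAdd (1 : ZMod 2)) = 0 then a else f a) = a at this
      simpa using this
    · intro h' g
      show (if Multiplicative.toAdd g = 0 then a else f a) = a
      split <;> simp [h']
  rw [Nat.card_congr this]

def conjW {n : ℕ} (w : ZMod n → Bool) : ZMod n → Bool := fun i => ! w i

lemma conjW_invol {n : ℕ} : Function.Involutive (conjW (n := n)) :=
  fun w => funext fun i => Bool.not_not _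

lemma rel_conj {n : ℕ} {w w' : ZMod n → Bool} (h : (cyclicSetoid n).r w w') :
    (cyclicSetoid n).r (conjW w) (conjW w') := by
  obtain ⟨r, h⟩ := h
  exact ⟨r, fun i => by simp [conjW, h i]⟩

lemma prim_conj {n : ℕ} {w : ZMod n → Bool} (h : PrimitiveWord w) :
    PrimitiveWord (conjW w) := by
  unfold PrimitiveWord at *
  refine Eq.trans (Nat.card_congr ?_) h
  exact ⟨fun x => ⟨conjW x.1, by have := rel_conj x.2; rwa [conjW_invol w] at this⟩,
    fun x => ⟨conjW x.1, rel_conj x.2⟩,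
    fun x => Subtype.ext (conjW_invol x.1), fun x => Subtype.ext (conjW_invol x.1)⟩

lemma special_iff {n : ℕ} {w : ZMod n → Bool} :
    SpecialWord w ↔ (cyclicSetoid n).r (conjW w) w := by
  constructor
  · rintro ⟨r, h⟩
    exact ⟨r, fun i => by show w i = ! w (i + r); rw [h i, Bool.not_not]⟩
  · rintro ⟨r, h⟩
    exact ⟨r, fun i => by
      have := h i; simp only [conjW] at this; rw [this, Bool.not_not]⟩

noncomputable def Fconj (n : ℕ) :
    Quotient (Setoid.comap
      (Subtype.val : {w : ZMod n → Bool // PrimitiveWord w} → (ZMod n → Bool))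
      (cyclicSetoid n)) →
    Quotient (Setoid.comap
      (Subtype.val : {w : ZMod n → Bool // PrimitiveWord w} → (ZMod n → Bool))
      (cyclicSetoid n)) :=
  Quotient.map' (fun w => ⟨conjW w.1, prim_conj w.2⟩) (fun _ _ h => rel_conj h)

lemma Fconj_invol (n : ℕ) : Function.Involutive (Fconj n) := fun x => by
  induction x using Quotient.inductionOn' with
  | h w =>
    show Quotient.mk'' _ = Quotient.mk'' _
    exact congrArg _ (Subtype.ext (conjW_invol w.1))

lemma card_fixed (m : ℕ) [NeZero (2 * m)] :
    Nat.card {x // Fconj (2 * m) x = x} = A m := by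
  unfold A
  symm
  apply Nat.card_congr
  refine Equiv.ofBijective
    (fun q => ⟨Quotient.map' (fun w => ⟨w.1, w.2.1⟩) (fun _ _ h => h) q, ?_⟩) ⟨?_, ?_⟩
  · induction q using Quotient.inductionOn' with
    | h w =>
      show Quotient.mk'' _ = Quotient.mk'' _
      exact Quotient.sound' (special_iff.mp w.2.2)
  · intro q q' h
    induction q using Quotient.inductionOn' with
    | h w =>
    induction q' using Quotient.inductionOn' with
    | h w' =>
      have h2 : (Quotient.mk'' (⟨w.1, w.2.1⟩ : {w : ZMod (2*m) → Bool // PrimitiveWord w}) :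
          Quotient _) = Quotient.mk'' ⟨w'.1, w'.2.1⟩ := congrArg Subtype.val h
      have h3 := Quotient.exact' h2
      exact Quotient.sound' h3
  · rintro ⟨x, hx⟩
    induction x using Quotient.inductionOn' with
    | h w =>
      have hx' : (Quotient.mk'' (⟨conjW w.1, prim_conj w.2⟩ :
          {w : ZMod (2*m) → Bool // PrimitiveWord w}) : Quotient _) = Quotient.mk'' w := hx
      have h4 := Quotient.exact' hx'
      have hs : SpecialWord w.1 := special_iff.mpr h4
      refine ⟨Quotient.mk'' ⟨w.1, w.2, hs⟩, ?_⟩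
      apply Subtype.ext
      show Quotient.mk'' _ = Quotient.mk'' _
      exact congrArg _ (Subtype.ext rfl)

end AuxForAModeqP

/-- `A(m) ≡ P(2m) (mod 2)`: the number of `∗`-primitive circular words of length `2m` is
congruent modulo `2` to the number of primitive circular words of length `2m`. -/
theorem A_modeq_P (m : ℕ) (hm : 1 ≤ m) : A m ≡ P (2 * m) [MOD 2] := by
  haveI : NeZero (2 * m) := ⟨by omega⟩
  have h := involutive_card_modEq (Fconj_invol (2 * m))
  rw [card_fixed m] at h
  exact h.symm
end

section
/- For every integer k ≥ 1, the number P(2k) of primitive circular words of length 2k is odd if and only if either k is an odd squarefree integer, or k = 2q for some odd squarefree integer q; otherwise P(2k) is even. -/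
/-!
Every word of length `n` is, in exactly one way, the lift of a primitive word (its root) whose
length `d` divides `n`, so the numbers `E d` of primitive words (`primitiveWordCount d`) satisfy
`∑_{d ∣ n} E d = 2 ^ n` and, by Möbius inversion, `E n = ∑_{d ∣ n} μ d * 2 ^ (n / d)`. Among
the nonzero terms the exponent `n / d` is smallest exactly for `d = rad n`, so
`v₂ (E n) = n / rad n`. Each primitive circular word consists of `n` words, so `E n = n * P n`,
and `P n` is odd iff `v₂ n = n / rad n`. For `n = 2 ^ (b + 1) * u` with `u` odd this reads
`b + 1 = 2 ^ b * (u / rad u)`, which holds iff `b ≤ 1` and `u` is squarefree.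
-/

open Function ArithmeticFunction UniqueFactorizationMonoid
open scoped ArithmeticFunction.Moebius

theorem Setoid.card_eq_card_quotient_mul {X : Type*} [Finite X] (s : Setoid X) {m : ℕ}
    (h : ∀ x, Nat.card {y // s x y} = m) : Nat.card X = Nat.card (Quotient s) * m := by
  have : Fintype (Quotient s) := Fintype.ofFinite _
  have hfiber (q : Quotient s) : Nat.card {x // Quotient.mk s x = q} = m := by
    induction q using Quotient.ind with
    | _ x => exact (Nat.card_congr (Equiv.subtypeEquivRight fun y =>
        Quotient.eq.trans ⟨s.symm, s.symm⟩)).trans (h x)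
  rw [← Nat.card_congr (Equiv.sigmaFiberEquiv (Quotient.mk s)), Nat.card_sigma,
    Finset.sum_congr rfl fun q _ => hfiber q, Finset.sum_const, Finset.card_univ, smul_eq_mul,
    Nat.card_eq_fintype_card]

lemma PrimitiveWord.of_rel {n : ℕ} {w w' : ZMod n → Bool} (hw : PrimitiveWord w)
    (h : (cyclicSetoid n).r w w') : PrimitiveWord w' := by
  refine (Nat.card_congr (Equiv.subtypeEquivRight fun _ => ?_)).trans hw
  exact ⟨(cyclicSetoid n).trans h, (cyclicSetoid n).trans ((cyclicSetoid n).symm h)⟩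

namespace CircularWord

variable {n d : ℕ}

def rotate (w : ZMod n → Bool) : ZMod n → Bool := fun i => w (i + 1)

lemma rotate_iterate_apply (t : ℕ) (w : ZMod n → Bool) (i : ZMod n) :
    rotate^[t] w i = w (i + t) := by
  induction t generalizing w with
  | zero => simp
  | succ t ih => rw [iterate_succ_apply, ih, rotate, Nat.cast_succ, add_assoc]

lemma isPeriodicPt_rotate (w : ZMod n → Bool) : IsPeriodicPt rotate n w :=
  funext fun i => by rw [rotate_iterate_apply, ZMod.natCast_self, add_zero]

lemma minimalPeriod_rotate_dvd (w : ZMod n → Bool) : minimalPeriod rotate w ∣ n :=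
  (isPeriodicPt_rotate w).minimalPeriod_dvd

lemma minimalPeriod_rotate_pos [NeZero n] (w : ZMod n → Bool) : 0 < minimalPeriod rotate w :=
  (isPeriodicPt_rotate w).minimalPeriod_pos (NeZero.pos n)

lemma cyclicSetoid_r_iff [NeZero n] {w w' : ZMod n → Bool} :
    (cyclicSetoid n).r w w' ↔ ∃ t : ℕ, rotate^[t] w = w' := by
  constructor
  · rintro ⟨r, h⟩
    exact ⟨r.val, funext fun i => by rw [rotate_iterate_apply, ZMod.natCast_zmod_val, h]⟩
  · rintro ⟨t, rfl⟩
    exact ⟨t, fun i => rotate_iterate_apply t w i⟩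

lemma card_cyclicSetoid_rel_eq_minimalPeriod [NeZero n] (w : ZMod n → Bool) :
    Nat.card {w' // (cyclicSetoid n).r w w'} = minimalPeriod rotate w := by
  have horbit : {w' | (cyclicSetoid n).r w w'} =
      (fun t => rotate^[t] w) '' Set.Iio (minimalPeriod rotate w) := by
    ext w'
    simp only [Set.mem_ofPred_eq, cyclicSetoid_r_iff, Set.mem_image, Set.mem_Iio]
    constructor
    · rintro ⟨t, rfl⟩
      exact ⟨t % minimalPeriod rotate w, Nat.mod_lt t (minimalPeriod_rotate_pos w),
        iterate_mod_minimalPeriod_eq⟩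
    · rintro ⟨t, -, rfl⟩
      exact ⟨t, rfl⟩
  calc Nat.card {w' // (cyclicSetoid n).r w w'}
      = Set.ncard {w' | (cyclicSetoid n).r w w'} := Nat.card_coe_set_eq _
    _ = minimalPeriod rotate w := by
      rw [horbit, iterate_injOn_Iio_minimalPeriod.ncard_image, Set.ncard_Iio_nat]

lemma primitiveWord_iff_minimalPeriod [NeZero n] (w : ZMod n → Bool) :
    PrimitiveWord w ↔ minimalPeriod rotate w = n := by
  rw [PrimitiveWord, card_cyclicSetoid_rel_eq_minimalPeriod]

def liftWord (h : d ∣ n) (v : ZMod d → Bool) : ZMod n → Bool := v ∘ ZMod.castHom h (ZMod d)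

lemma liftWord_injective (h : d ∣ n) : Injective (liftWord h) :=
  (ZMod.castHom_surjective h).injective_comp_right

lemma semiconj_liftWord_rotate (h : d ∣ n) : Semiconj (liftWord h) rotate rotate :=
  fun v => funext fun i => by
    simp only [liftWord, rotate, comp_apply, map_add, map_one]

lemma minimalPeriod_liftWord (h : d ∣ n) (v : ZMod d → Bool) :
    minimalPeriod rotate (liftWord h v) = minimalPeriod rotate v :=
  minimalPeriod_eq_minimalPeriod_iff.2 fun t => by
    rw [IsPeriodicPt, IsFixedPt, ← (semiconj_liftWord_rotate h).iterate_right t,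
      (liftWord_injective h).eq_iff]
    rfl

noncomputable def root (w : ZMod n → Bool) : ZMod (minimalPeriod rotate w) → Bool :=
  fun j => w j.val

lemma liftWord_root [NeZero n] (w : ZMod n → Bool) :
    liftWord (minimalPeriod_rotate_dvd w) (root w) = w := by
  funext i
  set p := minimalPeriod rotate w
  have hperiodic : ∀ x : ZMod n, w (x + (p * (i.val / p) : ℕ)) = w x := fun x => by
    simpa only [rotate_iterate_apply] using
      congrFun ((isPeriodicPt_minimalPeriod rotate w).mul_const (i.val / p)).eq x
  calc liftWord (minimalPeriod_rotate_dvd w) (root w) i = w ((i.val % p : ℕ) : ZMod n) := by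
        rw [liftWord, comp_apply, root, ZMod.castHom_apply, ZMod.cast_eq_val, ZMod.val_natCast]
    _ = w i := by
        rw [← hperiodic, ← Nat.cast_add, Nat.mod_add_div, ZMod.natCast_zmod_val]

lemma primitiveWord_root [NeZero n] (w : ZMod n → Bool) : PrimitiveWord (root w) := by
  have : NeZero (minimalPeriod rotate w) := ⟨(minimalPeriod_rotate_pos w).ne'⟩
  rw [primitiveWord_iff_minimalPeriod, ← minimalPeriod_liftWord (minimalPeriod_rotate_dvd w),
    liftWord_root]

lemma minimalPeriod_liftWord_of_primitiveWord [NeZero d] (h : d ∣ n) {v : ZMod d → Bool}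
    (hv : PrimitiveWord v) : minimalPeriod rotate (liftWord h v) = d := by
  rw [minimalPeriod_liftWord, (primitiveWord_iff_minimalPeriod v).1 hv]

instance (d : n.divisors) : NeZero (d : ℕ) := ⟨(Nat.pos_of_mem_divisors d.2).ne'⟩

noncomputable def primitiveLiftEquiv (n : ℕ) [NeZero n] :
    (Σ d : n.divisors, {v : ZMod d → Bool // PrimitiveWord v}) ≃ (ZMod n → Bool) :=
  Equiv.ofBijective (fun x => liftWord (Nat.dvd_of_mem_divisors x.1.2) x.2.1) <| by
    constructor
    · rintro ⟨d, v, hv⟩ ⟨d', v', hv'⟩ h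
      obtain rfl : d = d' := Subtype.ext <| by
        rw [← minimalPeriod_liftWord_of_primitiveWord (Nat.dvd_of_mem_divisors d.2) hv,
          ← minimalPeriod_liftWord_of_primitiveWord (Nat.dvd_of_mem_divisors d'.2) hv']
        exact congrArg _ h
      obtain rfl : v = v' := liftWord_injective _ h
      rfl
    · intro w
      exact ⟨⟨⟨_, Nat.mem_divisors.2 ⟨minimalPeriod_rotate_dvd w, NeZero.ne n⟩⟩, root w,
        primitiveWord_root w⟩, liftWord_root w⟩

noncomputable def primitiveWordCount (n : ℕ) : ℕ :=
  Nat.card {w : ZMod n → Bool // PrimitiveWord w}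

theorem sum_primitiveWordCount_divisors (n : ℕ) [NeZero n] :
    ∑ d ∈ n.divisors, primitiveWordCount d = 2 ^ n := by
  have hcard := Nat.card_congr (primitiveLiftEquiv n)
  rw [Nat.card_sigma, Nat.card_fun, Nat.card_zmod, Nat.card_eq_fintype_card (α := Bool),
    Fintype.card_bool] at hcard
  rw [← Finset.sum_coe_sort, ← hcard]
  rfl

theorem primitiveWordCount_eq_P_mul (n : ℕ) [NeZero n] : primitiveWordCount n = P n * n := by
  refine Setoid.card_eq_card_quotient_mul _ fun ⟨w, hw⟩ => ?_
  exact (Nat.card_congr (Equiv.subtypeSubtypeEquivSubtype hw.of_rel)).trans hw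

theorem primitiveWordCount_eq_sum_moebius {n : ℕ} (hn : 0 < n) :
    (primitiveWordCount n : ℤ) = ∑ d ∈ n.divisors, (μ d : ℤ) * 2 ^ (n / d) := by
  have hsum : ∀ m > 0, ∑ d ∈ m.divisors, (primitiveWordCount d : ℤ) = 2 ^ m := by
    intro m hm
    have : NeZero m := ⟨hm.ne'⟩
    exact_mod_cast sum_primitiveWordCount_divisors m
  rw [← (sum_eq_iff_sum_smul_moebius_eq.1 hsum) n hn,
    Nat.sum_divisorsAntidiagonal fun d e => (μ d : ℤ) • (2 : ℤ) ^ e]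
  simp only [smul_eq_mul]

end CircularWord

namespace Nat

lemma div_lt_div_of_dvd_of_lt {n d r : ℕ} (hn : n ≠ 0) (hd : d ∣ n) (hr : r ∣ n)
    (hdr : d < r) : n / r < n / d := by
  have hpos : 0 < n / r := Nat.div_pos (Nat.le_of_dvd (Nat.pos_of_ne_zero hn) hr)
    (Nat.pos_of_dvd_of_pos hr (Nat.pos_of_ne_zero hn))
  have h1 := Nat.div_mul_cancel hd
  have h2 := Nat.div_mul_cancel hr
  by_contra! h
  nlinarith

lemma radical_two_pow_succ_mul {b u : ℕ} (hu : Odd u) :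
    radical (2 ^ (b + 1) * u) = 2 * radical u := by
  rw [radical_mul (Nat.coprime_iff_isRelPrime.1 ((Nat.coprime_two_left.2 hu).pow_left _)),
    radical_pow _ b.succ_ne_zero, radical_of_prime Nat.prime_two.prime, normalize_eq]

lemma div_radical_eq_one_iff {u : ℕ} (hu : u ≠ 0) : u / radical u = 1 ↔ Squarefree u := by
  rw [Nat.div_eq_iff_eq_mul_left (Nat.radical_pos u) radical_dvd_self, one_mul]
  exact ⟨fun h => h ▸ squarefree_radical,
    fun h => (associated_iff_eq.1 (radical_associated h.isRadical hu)).symm⟩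

lemma succ_eq_two_pow_mul_iff {b c : ℕ} (hc : c ≠ 0) :
    b + 1 = 2 ^ b * c ↔ (b = 0 ∨ b = 1) ∧ c = 1 := by
  match b with
  | 0 => simp [eq_comm]
  | 1 => omega
  | b + 2 =>
    have h1 : b + 3 < 2 ^ (b + 2) := by
      have := Nat.lt_two_pow_self (n := b)
      rw [pow_add]
      omega
    have h2 : 2 ^ (b + 2) ≤ 2 ^ (b + 2) * c := Nat.le_mul_of_pos_right _ (Nat.pos_of_ne_zero hc)
    omega

lemma odd_two_pow_mul_iff {b u : ℕ} (hu : Odd u) : Odd (2 ^ b * u) ↔ b = 0 := by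
  rw [Nat.odd_mul, ← Nat.not_even_iff_odd, Nat.even_pow]
  simp [hu]

lemma odd_squarefree_or_eq_two_mul_iff {b u : ℕ} (hu : Odd u) :
    ((Odd (2 ^ b * u) ∧ Squarefree (2 ^ b * u)) ∨
        ∃ q, Odd q ∧ Squarefree q ∧ 2 ^ b * u = 2 * q) ↔
      (b = 0 ∨ b = 1) ∧ Squarefree u := by
  constructor
  · rintro (⟨hodd, hsq⟩ | ⟨q, hq, hsq, h⟩)
    · obtain rfl := (odd_two_pow_mul_iff hu).1 hodd
      exact ⟨Or.inl rfl, by simpa using hsq⟩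
    · obtain _ | b := b
      · rw [pow_zero, one_mul] at h
        exact absurd ((odd_two_pow_mul_iff (b := 1) hq).1 (by rwa [pow_one, ← h])) one_ne_zero
      · have hqu : q = 2 ^ b * u := by rw [pow_succ', mul_assoc] at h; omega
        obtain rfl := (odd_two_pow_mul_iff hu).1 (hqu ▸ hq)
        exact ⟨Or.inr rfl, by simpa [hqu] using hsq⟩
  · rintro ⟨rfl | rfl, hsq⟩
    · exact Or.inl ⟨by simpa using hu, by simpa using hsq⟩
    · exact Or.inr ⟨u, hu, hsq, by ring⟩

theorem padicValNat_two_mul_eq_div_radical_iff {k : ℕ} (hk : k ≠ 0) :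
    padicValNat 2 (2 * k) = 2 * k / radical (2 * k) ↔
      (Odd k ∧ Squarefree k) ∨ ∃ q, Odd q ∧ Squarefree q ∧ k = 2 * q := by
  obtain ⟨b, u, hu, rfl⟩ := Nat.exists_eq_two_pow_mul_odd hk
  have hu0 : u ≠ 0 := hu.pos.ne'
  have hval : padicValNat 2 (2 ^ (b + 1) * u) = b + 1 := by
    rw [padicValNat.mul (by positivity) hu0, padicValNat.prime_pow,
      padicValNat.eq_zero_of_not_dvd hu.not_two_dvd_nat, add_zero]
  have hdiv : 2 ^ (b + 1) * u / radical (2 ^ (b + 1) * u) = 2 ^ b * (u / radical u) := by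
    rw [radical_two_pow_succ_mul hu, Nat.mul_div_mul_comm (dvd_pow_self 2 b.succ_ne_zero)
      radical_dvd_self, pow_succ, Nat.mul_div_cancel _ two_pos]
  have hquot : u / radical u ≠ 0 :=
    (Nat.div_pos (Nat.le_of_dvd hu.pos radical_dvd_self) (Nat.radical_pos u)).ne'
  rw [← mul_assoc, ← pow_succ', hval, hdiv, succ_eq_two_pow_mul_iff hquot,
    div_radical_eq_one_iff hu0, odd_squarefree_or_eq_two_mul_iff hu]

end Nat

theorem padicValInt_sum_moebius_mul_pow {p : ℕ} [hp : Fact p.Prime] {n : ℕ} (hn : n ≠ 0) :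
    padicValInt p (∑ d ∈ n.divisors, (μ d : ℤ) * (p : ℤ) ^ (n / d)) = n / radical n := by
  set t := n / radical n
  have hrad : radical n ∈ n.divisors := Nat.mem_divisors.2 ⟨radical_dvd_self, hn⟩
  have hrest : (p : ℤ) ^ (t + 1) ∣
      ∑ d ∈ n.divisors.erase (radical n), (μ d : ℤ) * (p : ℤ) ^ (n / d) := by
    refine Finset.dvd_sum fun d hd => ?_
    obtain ⟨hne, hdn⟩ := Finset.mem_erase.1 hd
    by_cases hsq : Squarefree d
    · have hdr : d ∣ radical n :=
        (dvd_radical_iff hsq.isRadical hn).2 (Nat.dvd_of_mem_divisors hdn)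
      have hlt : t < n / d := Nat.div_lt_div_of_dvd_of_lt hn (Nat.dvd_of_mem_divisors hdn)
        radical_dvd_self (lt_of_le_of_ne (Nat.le_of_dvd (Nat.radical_pos n) hdr) hne)
      exact Dvd.dvd.mul_left (pow_dvd_pow _ hlt) _
    · simp [moebius_eq_zero_of_not_squarefree hsq]
  obtain ⟨T, hT⟩ := hrest
  have hsplit : ∑ d ∈ n.divisors, (μ d : ℤ) * (p : ℤ) ^ (n / d) =
      (p : ℤ) ^ t * (μ (radical n) + p * T) := by
    rw [← Finset.sum_erase_add _ _ hrad, hT]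
    ring
  have hndvd : ¬ (p : ℤ) ∣ μ (radical n) + p * T := by
    rw [dvd_add_left (dvd_mul_right _ T), ← dvd_abs,
      abs_moebius_eq_one_of_squarefree squarefree_radical, ← Nat.cast_one,
      Int.natCast_dvd_natCast, Nat.dvd_one]
    exact hp.out.ne_one
  rw [hsplit, padicValInt.mul (by simp [hp.out.ne_zero]) (by rintro h; simp [h] at hndvd),
    padicValInt.eq_zero_of_not_dvd hndvd, ← Nat.cast_pow, padicValInt.of_nat,
    padicValNat.prime_pow, add_zero]

open CircularWord in
theorem odd_P_iff (n : ℕ) [NeZero n] : Odd (P n) ↔ padicValNat 2 n = n / radical n := by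
  have hval : padicValNat 2 (P n * n) = n / radical n := by
    rw [← primitiveWordCount_eq_P_mul, ← padicValInt.of_nat,
      primitiveWordCount_eq_sum_moebius (NeZero.pos n)]
    exact_mod_cast padicValInt_sum_moebius_mul_pow (p := 2) (NeZero.ne n)
  have hP : P n ≠ 0 := by
    rintro hP
    rw [hP, zero_mul, padicValNat_zero_right] at hval
    exact (Nat.div_pos (Nat.radical_le_self_iff.2 (NeZero.ne n)) (Nat.radical_pos n)).ne hval
  rw [padicValNat.mul hP (NeZero.ne n)] at hval
  have hodd : Odd (P n) ↔ padicValNat 2 (P n) = 0 := by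
    simp [← Nat.not_even_iff_odd, even_iff_two_dvd, padicValNat.eq_zero_iff, hP]
  rw [hodd]
  omega

/-- `P(2k)` is odd if and only if `k` is an odd squarefree integer or `k = 2q` for an odd
squarefree integer `q`; otherwise `P(2k)` is even. -/
theorem P_two_k_odd_iff (k : ℕ) (hk : 1 ≤ k) :
    Odd (P (2 * k)) ↔
      (Odd k ∧ Squarefree k) ∨ ∃ q : ℕ, Odd q ∧ Squarefree q ∧ k = 2 * q := by
  have : NeZero (2 * k) := ⟨by omega⟩
  rw [odd_P_iff, Nat.padicValNat_two_mul_eq_div_radical_iff (by omega)]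
end
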